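/- arXiv:1905.03477 — 7 statements merged into one kernel-verified Lean document; each statement's English description precedes it below -/
import Mathlib

section
/- Let X be a metric space, G ⊆ X an open set, and for each n let Z_n be a maximal (1/2^n)-sparse subset of O_n := G ∩ N_{1/2^n}(B) \ (Z_0 ∪ … ∪ Z_{n−1}), where B = cl(G) \ G is assumed non-empty and N_ε(B) denotes the ε-neighbourhood of B. Then G ∩ d(⋃_{n<ω} Z_n) = ∅. -/
/-!
Every `z ∈ Z n` lies within `1 / 2 ^ n` of `B`, while a point `x ∈ G` keeps a distance `r > 0`
from `B` because `G` is open and disjoint from `B`. Hence, for `ε = 1 / 2 ^ N ≤ r / 2`, the ball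
`ball x ε` misses every `Z n` with `n ≥ N`, and by sparseness meets each of the finitely many
remaining `Z n` in at most one point. A point with a neighbourhood meeting `⋃ n, Z n` in a finite
set is not an accumulation point of it.
-/

open Filter Metric Set

section PseudoMetric

variable {X : Type*} [PseudoMetricSpace X]

lemma subsingleton_inter_ball_half_of_sparse {S : Set X} {δ : ℝ}
    (hS : ∀ y ∈ S, ∀ z ∈ S, y ≠ z → δ ≤ dist y z) (x : X) :
    (S ∩ ball x (δ / 2)).Subsingleton := by
  rintro y ⟨hyS, hyx⟩ z ⟨hzS, hzx⟩
  by_contra hyz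
  rw [mem_ball] at hyx hzx
  have := hS y hyS z hzS hyz
  have := dist_triangle_right y z x
  linarith

lemma sub_le_dist_of_disjoint_ball {B : Set X} {x z b : X} {r δ : ℝ}
    (hxB : Disjoint (ball x r) B) (hb : b ∈ B) (hzb : dist z b < δ) : r - δ ≤ dist x z := by
  have hxb : r ≤ dist x b := not_lt.mp fun h => hxB.notMem_of_mem_left (mem_ball'.mpr h) hb
  linarith [dist_triangle x z b]

lemma finite_ball_inter_iUnion {S : ℕ → Set X} {x : X} {ε : ℝ} (N : ℕ)
    (hfin : ∀ n < N, (ball x ε ∩ S n).Finite) (hfar : ∀ n, N ≤ n → Disjoint (ball x ε) (S n)) :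
    (ball x ε ∩ ⋃ n, S n).Finite := by
  refine ((finite_Iio N).biUnion fun n hn => hfin n hn).subset ?_
  rintro y ⟨hyx, hyS⟩
  obtain ⟨n, hyn⟩ := mem_iUnion.mp hyS
  have hn : n < N := not_le.mp fun h => (hfar n h).notMem_of_mem_left hyx hyn
  exact mem_biUnion hn ⟨hyx, hyn⟩

end PseudoMetric

lemma not_accPt_of_finite_ball_inter {X : Type*} [MetricSpace X] {S : Set X} {x : X} {ε : ℝ}
    (hε : 0 < ε) (hfin : (ball x ε ∩ S).Finite) : ¬AccPt x (𝓟 S) := fun hx =>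
  Infinite.of_accPt (hx.nhds_inter (ball_mem_nhds x hε)) hfin

lemma exists_one_div_two_pow_lt {r : ℝ} (hr : 0 < r) : ∃ N : ℕ, 1 / 2 ^ N < r := by
  obtain ⟨N, hN⟩ := exists_pow_lt_of_lt_one hr (by norm_num : (1 / 2 : ℝ) < 1)
  exact ⟨N, by rwa [div_pow, one_pow] at hN⟩

lemma one_div_two_pow_le_half {m n : ℕ} (h : m < n) : (1 : ℝ) / 2 ^ n ≤ 1 / 2 ^ m / 2 := by
  rw [div_div, ← pow_succ]
  exact one_div_pow_le_one_div_pow_of_le one_le_two h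

theorem stmt_5_general {X : Type*} [MetricSpace X] {G : Set X} (hG : IsOpen G)
    {B : Set X} (hB : B = closure G \ G)
    (Z O : ℕ → Set X)
    (hO : ∀ n, O n = (G ∩ {x | ∃ b ∈ B, dist x b < 1 / 2 ^ n}) \ ⋃ m < n, Z m)
    (hZsub : ∀ n, Z n ⊆ O n)
    (hZsparse : ∀ n, ∀ x ∈ Z n, ∀ y ∈ Z n, x ≠ y → 1 / 2 ^ n ≤ dist x y) :
    G ∩ derivedSet (⋃ n, Z n) = ∅ := by
  refine eq_empty_of_forall_notMem fun x ⟨hxG, hxacc⟩ => ?_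
  obtain ⟨r, hr, hrG⟩ := Metric.isOpen_iff.mp hG x hxG
  have hxB : Disjoint (ball x r) B := by
    rw [hB]
    exact disjoint_sdiff_right.mono_left hrG
  obtain ⟨N, hN⟩ := exists_one_div_two_pow_lt (half_pos hr)
  have hfar : ∀ n, N ≤ n → Disjoint (ball x (1 / 2 ^ N)) (Z n) := by
    refine fun n hn => disjoint_left.mpr fun z hzx hz => ?_
    have hzO := hZsub n hz
    rw [hO n] at hzO
    obtain ⟨b, hb, hzb⟩ := hzO.1.2
    have := sub_le_dist_of_disjoint_ball hxB hb
      (hzb.trans_le (one_div_pow_le_one_div_pow_of_le one_le_two hn))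
    rw [mem_ball'] at hzx
    linarith
  have hnear : ∀ n < N, (ball x (1 / 2 ^ N) ∩ Z n).Finite := fun n hn =>
    (subsingleton_inter_ball_half_of_sparse (hZsparse n) x).finite.subset fun z ⟨hzx, hz⟩ =>
      ⟨hz, ball_subset_ball (one_div_two_pow_le_half hn) hzx⟩
  exact not_accPt_of_finite_ball_inter (by positivity) (finite_ball_inter_iUnion N hnear hfar) hxacc

/-- If `Z n` is a maximal `(1/2^n)`-sparse subset of
`O n = G ∩ N_{1/2^n}(B) \ (Z 0 ∪ ⋯ ∪ Z (n-1))`, where `B = cl G \ G ≠ ∅`,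
then `G ∩ d(⋃ n, Z n) = ∅`. -/
theorem stmt_5 {X : Type*} [MetricSpace X] {G : Set X} (hG : IsOpen G)
    {B : Set X} (hB : B = closure G \ G) (hBne : B.Nonempty)
    (Z O : ℕ → Set X)
    (hO : ∀ n, O n = (G ∩ {x | ∃ b ∈ B, dist x b < 1 / 2 ^ n}) \ ⋃ m < n, Z m)
    (hZsub : ∀ n, Z n ⊆ O n)
    (hZsparse : ∀ n, ∀ x ∈ Z n, ∀ y ∈ Z n, x ≠ y → 1 / 2 ^ n ≤ dist x y)
    (hZmax : ∀ n, ∀ x ∈ O n, x ∉ Z n → ∃ z ∈ Z n, dist x z < 1 / 2 ^ n) :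
    G ∩ derivedSet (⋃ n, Z n) = ∅ :=
  stmt_5_general hG hB Z O hO hZsub hZsparse
end

section
/- Let X be a dense-in-itself metric space, G ⊆ X open, and I a countable index set. Then there exist pairwise disjoint sets I_i ⊆ G (i ∈ I) such that d(I_i) = cl(G) \ G for every i ∈ I, and G ∩ d(⋃_{i∈I} I_i) = ∅. -/
open Metric Set Filter Topology

private lemma aux_finite_ball_not_derivedSet {X : Type*} [MetricSpace X] {T : Set X} {x : X}
    {ε : ℝ} (hε : 0 < ε) (h : (T ∩ Metric.ball x ε).Finite) : x ∉ derivedSet T := by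
  intro hx
  rw [mem_derivedSet, accPt_iff_nhds] at hx
  have hF : ((T ∩ Metric.ball x ε) \ {x}).Finite := h.subset diff_subset
  have hcl : IsClosed ((T ∩ Metric.ball x ε) \ {x}) := hF.isClosed
  have hU : ((T ∩ Metric.ball x ε) \ {x})ᶜ ∩ Metric.ball x ε ∈ 𝓝 x :=
    inter_mem (hcl.isOpen_compl.mem_nhds fun hc => hc.2 rfl) (Metric.ball_mem_nhds x hε)
  obtain ⟨y, ⟨⟨hyc, hyb⟩, hyT⟩, hyx⟩ := hx _ hU
  exact hyc ⟨⟨hyT, hyb⟩, hyx⟩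

/-- In a dense-in-itself metric space, for open `G` and countable `I` there are
pairwise disjoint sets `f i ⊆ G` with `d(f i) = cl G \ G` and `G ∩ d(⋃ i, f i) = ∅`. -/
theorem stmt_6 {X : Type*} [MetricSpace X] [PerfectSpace X] {G : Set X} (hG : IsOpen G)
    (I : Type*) [Countable I] :
    ∃ f : I → Set X, (∀ i, f i ⊆ G) ∧ Pairwise (Function.onFun Disjoint f) ∧
      (∀ i, derivedSet (f i) = closure G \ G) ∧ G ∩ derivedSet (⋃ i, f i) = ∅ := by
  classical
  obtain ⟨e, he⟩ := Countable.exists_injective_nat I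
  set r : X → ℝ := fun y => Metric.infDist y Gᶜ with hr
  set S : Set X := {y | y ∈ G ∧ 0 < r y} with hS
  -- Zorn: a maximal separated set
  obtain ⟨D, hDmax⟩ := zorn_subset
      {D : Set X | D ⊆ S ∧ ∀ z ∈ D, ∀ w ∈ D, z ≠ w → min (r z) (r w) / 4 ≤ dist z w} (by
    intro c hc hchain
    refine ⟨⋃₀ c, ⟨sUnion_subset fun t ht => (hc ht).1, ?_⟩, fun s hs => subset_sUnion_of_mem hs⟩
    rintro z ⟨t, htc, hzt⟩ w ⟨t', ht'c, hwt'⟩ hzw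
    rcases hchain.total htc ht'c with h | h
    · exact (hc ht'c).2 z (h hzt) w hwt' hzw
    · exact (hc htc).2 z hzt w (h hwt') hzw)
  obtain ⟨⟨hDS, hDsep⟩, -⟩ := id hDmax
  -- facts about points of D
  have hrD : ∀ z ∈ D, 0 < r z := fun z hz => (hDS hz).2
  have hLip : ∀ a b : X, r a ≤ r b + dist a b := fun a b =>
    Metric.infDist_le_infDist_add_dist
  have hballG : ∀ z ∈ D, Metric.ball z (r z / 16) ⊆ G := by
    intro z hz w hw
    by_contra hwG
    have h1 : r z ≤ dist z w := Metric.infDist_le_dist_of_mem hwG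
    have h2 : dist w z < r z / 16 := by rwa [Metric.mem_ball] at hw
    rw [dist_comm] at h2
    have := hrD z hz
    linarith
  -- maximality consequence
  have hnear : ∀ y ∈ S, ∃ z ∈ D, dist y z ≤ r y / 4 := by
    intro y hy
    by_cases hyD : y ∈ D
    · exact ⟨y, hyD, by rw [dist_self]; have := hy.2; linarith⟩
    · by_contra hcon
      push_neg at hcon
      have hins : insert y D ∈
          {D : Set X | D ⊆ S ∧ ∀ z ∈ D, ∀ w ∈ D, z ≠ w → min (r z) (r w) / 4 ≤ dist z w} := by
        constructor
        · exact insert_subset hy hDS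
        · rintro z (rfl | hz) w (rfl | hw) hzw
          · exact absurd rfl hzw
          · have h1 := hcon w hw
            have h2 := min_le_left (r z) (r w)
            linarith
          · have h1 := hcon z hz
            have h2 := min_le_right (r z) (r w)
            rw [dist_comm] at h1
            linarith
          · exact hDsep z hz w hw hzw
      have : insert y D ⊆ D := hDmax.2 hins (subset_insert y D)
      exact hyD (this (mem_insert y D))
  -- the chosen points
  have hball : ∀ z ∈ D, (Metric.ball z (r z / 16)).Infinite := by
    intro z hz
    exact infinite_of_mem_nhds z (Metric.ball_mem_nhds z (by have := hrD z hz; linarith))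
  set p : X → ℕ → X := fun z n =>
    if h : (Metric.ball z (r z / 16)).Infinite then (Set.Infinite.natEmbedding (Metric.ball z (r z / 16)) h n : X) else z with hp
  have hp_mem : ∀ z ∈ D, ∀ n, p z n ∈ Metric.ball z (r z / 16) := by
    intro z hz n
    simp only [hp, dif_pos (hball z hz)]
    exact (Set.Infinite.natEmbedding (Metric.ball z (r z / 16)) (hball z hz) n).2
  have hp_inj : ∀ z ∈ D, ∀ m n : ℕ, p z m = p z n → m = n := by
    intro z hz m n hmn
    simp only [hp, dif_pos (hball z hz)] at hmn
    exact (Set.Infinite.natEmbedding (Metric.ball z (r z / 16)) (hball z hz)).injective (Subtype.ext hmn)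
  set N : X → ℕ := fun z => ⌈(r z)⁻¹⌉₊ with hN
  set f : I → Set X := fun i => {x | ∃ z ∈ D, e i ≤ N z ∧ x = p z (e i)} with hf
  -- disjoint balls for distinct sites
  have hdisj : ∀ z ∈ D, ∀ w ∈ D, z ≠ w → ∀ a, a ∈ Metric.ball z (r z / 16) →
      a ∉ Metric.ball w (r w / 16) := by
    intro z hz w hw hzw a haz haw
    rw [Metric.mem_ball, dist_comm] at haz haw
    have hd : dist z w ≤ dist z a + dist w a := by
      have := dist_triangle z a w
      rw [dist_comm a w] at this
      linarith [dist_comm z a ▸ this]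
    have hsep := hDsep z hz w hw hzw
    have h1 := hLip z w
    have h2 := hLip w z
    rw [dist_comm w z] at h2
    have hz0 := hrD z hz
    have hw0 := hrD w hw
    rcases min_cases (r z) (r w) with ⟨hmin, hle⟩ | ⟨hmin, hle⟩ <;> rw [hmin] at hsep <;> linarith
  -- f i ⊆ G
  have hfG : ∀ i, f i ⊆ G := by
    rintro i x ⟨z, hz, -, rfl⟩
    exact hballG z hz (hp_mem z hz (e i))
  -- site localization near an interior point
  have hGc_closed : IsClosed Gᶜ := hG.isClosed_compl
  -- no accumulation of the union in G
  have hT : ∀ z₀ ∈ G, z₀ ∉ derivedSet (⋃ i, f i) := by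
    intro z₀ hz₀
    by_cases hc : Gᶜ.Nonempty
    · have hδ : 0 < r z₀ := by
        rw [hr]
        exact (hGc_closed.notMem_iff_infDist_pos hc).1 (by simpa using hz₀)
      set δ := r z₀ with hδeq
      apply aux_finite_ball_not_derivedSet (ε := δ / 50) (by linarith)
      -- any site contributing a point to this ball is within δ/10 of z₀
      have hsite : ∀ z ∈ D, ∀ n : ℕ, p z n ∈ Metric.ball z₀ (δ / 50) → dist z z₀ < δ / 10 := by
        intro z hz n hpn
        have h1 : dist (p z n) z < r z / 16 := by
          have := hp_mem z hz n; rwa [Metric.mem_ball] at this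
        have h2 : dist (p z n) z₀ < δ / 50 := by rwa [Metric.mem_ball] at hpn
        have h3 : r z ≤ δ + dist z z₀ := by
          have := hLip z z₀; linarith
        have h4 : dist z z₀ ≤ dist z (p z n) + dist (p z n) z₀ := dist_triangle _ _ _
        rw [dist_comm z (p z n)] at h4
        linarith
      -- hence at most one contributing site
      by_cases hne : ((⋃ i, f i) ∩ Metric.ball z₀ (δ / 50)).Nonempty
      · obtain ⟨x₀, hx₀U, hx₀b⟩ := hne
        simp only [mem_iUnion] at hx₀U
        obtain ⟨i₀, z₀', hz₀', hN₀, hx₀⟩ := hx₀U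
        have hsub : (⋃ i, f i) ∩ Metric.ball z₀ (δ / 50) ⊆
            (fun n => p z₀' n) '' {n | n ≤ N z₀'} := by
          rintro x ⟨hxU, hxb⟩
          simp only [mem_iUnion] at hxU
          obtain ⟨i, z, hz, hNz, rfl⟩ := hxU
          have hzz : z = z₀' := by
            by_contra hne'
            have d1 := hsite z hz (e i) hxb
            have d2 := hsite z₀' hz₀' (e i₀) (hx₀ ▸ hx₀b)
            have hsep := hDsep z hz z₀' hz₀' hne'
            have hdzz : dist z z₀' ≤ dist z z₀ + dist z₀' z₀ := by
              have := dist_triangle z z₀ z₀'; rw [dist_comm z₀ z₀'] at this; linarith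
            have hrz : δ ≤ r z + dist z z₀ := by
              have := hLip z₀ z; rw [dist_comm z₀ z] at this; linarith
            have hrz' : δ ≤ r z₀' + dist z₀' z₀ := by
              have := hLip z₀ z₀'; rw [dist_comm z₀ z₀'] at this; linarith
            rcases min_cases (r z) (r z₀') with ⟨hmin, -⟩ | ⟨hmin, -⟩ <;>
              rw [hmin] at hsep <;> linarith
          exact ⟨e i, by simpa [hzz] using hNz, by rw [hzz]⟩
        exact Set.Finite.subset ((Set.finite_Iic (N z₀')).image _) hsub
      · rw [Set.not_nonempty_iff_eq_empty] at hne
        simp [hne]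
    · -- G = univ: D is empty
      rw [Set.not_nonempty_iff_eq_empty] at hc
      have hSempty : S = ∅ := by
        ext y
        simp only [hS, mem_setOf_eq, mem_empty_iff_false, iff_false, not_and]
        intro _
        simp [hr, hc, Metric.infDist_empty]
      have hDe : D = ∅ := by
        rw [← Set.subset_empty_iff, ← hSempty]; exact hDS
      have : (⋃ i, f i) = ∅ := by
        ext x
        simp only [mem_iUnion, mem_empty_iff_false, iff_false, not_exists]
        rintro i ⟨z, hz, -, -⟩
        simp [hDe] at hz
      rw [this]
      apply aux_finite_ball_not_derivedSet (ε := 1) one_pos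
      simp
  -- boundary points are accumulation points of each f i
  have hacc : ∀ i, ∀ x ∈ closure G \ G, x ∈ derivedSet (f i) := by
    rintro i x ⟨hx1, hx2⟩
    rw [mem_derivedSet, accPt_iff_nhds]
    intro U hU
    obtain ⟨ε, hε, hballU⟩ := Metric.mem_nhds_iff.1 hU
    set ε' : ℝ := min (ε / 2) (1 / (e i + 1)) with hε'eq
    have hε' : 0 < ε' := lt_min (by linarith) (by positivity)
    obtain ⟨y, hyG, hyx⟩ := Metric.mem_closure_iff.1 hx1 (ε' / 2) (by linarith)
    rw [dist_comm] at hyx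
    have hxGc : x ∈ Gᶜ := hx2
    have hry_le : r y ≤ dist y x := Metric.infDist_le_dist_of_mem hxGc
    have hry_pos : 0 < r y := by
      rw [hr]
      exact (hGc_closed.notMem_iff_infDist_pos ⟨x, hxGc⟩).1 (by simpa using hyG)
    obtain ⟨z, hzD, hzy⟩ := hnear y ⟨hyG, hry_pos⟩
    have hzx : dist z x < ε' := by
      have := dist_triangle z y x
      rw [dist_comm z y] at this
      linarith
    have hrz_le : r z ≤ dist z x := Metric.infDist_le_dist_of_mem hxGc
    have hrz_pos : 0 < r z := hrD z hzD
    have hNz : e i ≤ N z := by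
      have h1 : r z < 1 / (e i + 1) := lt_of_le_of_lt hrz_le (lt_of_lt_of_le hzx (min_le_right _ _))
      have h2 : (e i : ℝ) ≤ (r z)⁻¹ := by
        have ha : (0:ℝ) < (e i : ℝ) + 1 := by positivity
        have hb : r z * ((e i : ℝ) + 1) < 1 := by
          calc r z * ((e i : ℝ) + 1) < (1 / ((e i : ℝ) + 1)) * ((e i : ℝ) + 1) := by
                exact mul_lt_mul_of_pos_right h1 ha
            _ = 1 := by field_simp
        have hc : ((e i : ℝ) + 1) * r z < 1 * 1 := by rw [one_mul]; linarith [mul_comm (r z) ((e i : ℝ) + 1)]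
        have hd : ((e i : ℝ) + 1) ≤ (r z)⁻¹ := by
          nlinarith [mul_inv_cancel₀ (ne_of_gt hrz_pos), inv_pos.2 hrz_pos]
        linarith
      calc (e i : ℕ) = ⌈((e i : ℕ) : ℝ)⌉₊ := (Nat.ceil_natCast _).symm
        _ ≤ ⌈(r z)⁻¹⌉₊ := Nat.ceil_le_ceil h2
    refine ⟨p z (e i), ⟨hballU ?_, ⟨z, hzD, hNz, rfl⟩⟩, ?_⟩
    · have h1 : dist (p z (e i)) z < r z / 16 := by
        have := hp_mem z hzD (e i); rwa [Metric.mem_ball] at this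
      have h2 : dist (p z (e i)) x ≤ dist (p z (e i)) z + dist z x := dist_triangle _ _ _
      have h3 : ε' ≤ ε / 2 := min_le_left _ _
      rw [Metric.mem_ball]
      linarith
    · intro hpx
      exact hx2 (hpx ▸ hballG z hzD (hp_mem z hzD (e i)))
  refine ⟨f, hfG, ?_, ?_, ?_⟩
  · -- pairwise disjoint
    intro i j hij
    rw [Function.onFun, Set.disjoint_left]
    rintro x ⟨z, hz, -, rfl⟩ ⟨w, hw, -, hxw⟩
    by_cases hzw : z = w
    · subst hzw
      exact he (hp_inj z hz _ _ hxw) |> hij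
    · exact hdisj z hz w hw hzw _ (hp_mem z hz (e i)) (hxw ▸ hp_mem w hw (e j))
  · -- derivedSet (f i) = closure G \ G
    intro i
    apply Set.Subset.antisymm
    · intro x hx
      constructor
      · exact closure_mono (hfG i) (derivedSet_subset_closure _ hx)
      · intro hxG
        exact hT x hxG (derivedSet_mono _ _ (Set.subset_iUnion f i) hx)
    · intro x hx
      exact hacc i x hx
  · -- G ∩ derivedSet (⋃ f i) = ∅
    rw [Set.eq_empty_iff_forall_notMem]
    rintro x ⟨hxG, hxd⟩
    exact hT x hxG hxd
end

section
/- Let X be a 0-dimensional metric space, G ⊆ X open, and Z ⊆ G with G ∩ d(Z) = ∅. Then there is a family of sets (K(T) : T ⊆ Z) of subsets of G such that for each T ⊆ Z: (1) T ⊆ K(T) ⊆ G; (2) K commutes with arbitrary unions (K(⋃𝒰) = ⋃_{U∈𝒰} K(U) for 𝒰 ⊆ 𝒫(Z)); (3) disjoint subsets of Z are mapped to disjoint sets; (4) K(T) is open; (5) G \ K(T) is open. -/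
/-- In a 0-dimensional metric space (T1 holds automatically; 0-dimensionality is a
base of clopen sets), for open `G` and `Z ⊆ G` with `G ∩ d(Z) = ∅`, there is a map
`K` on subsets of `Z` with the listed properties. -/
theorem stmt_7 {X : Type*} [MetricSpace X]
    (h0 : ∀ x : X, ∀ U ∈ nhds x, ∃ V : Set X, IsClopen V ∧ x ∈ V ∧ V ⊆ U)
    {G Z : Set X} (hG : IsOpen G) (hZG : Z ⊆ G) (hd : G ∩ derivedSet Z = ∅) :
    ∃ K : Set X → Set X,
      (∀ T ⊆ Z, T ⊆ K T ∧ K T ⊆ G) ∧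
      (∀ 𝒰 : Set (Set X), (∀ U ∈ 𝒰, U ⊆ Z) → K (⋃₀ 𝒰) = ⋃ U ∈ 𝒰, K U) ∧
      (∀ T ⊆ Z, ∀ U ⊆ Z, Disjoint T U → Disjoint (K T) (K U)) ∧
      (∀ T ⊆ Z, IsOpen (K T)) ∧
      (∀ T ⊆ Z, IsOpen (G \ K T)) := by
  -- no point of G is an accumulation point of Z
  have hnoacc : ∀ x ∈ G, x ∉ derivedSet Z := by
    intro x hx hacc
    exact absurd (Set.mem_inter hx hacc) (by rw [hd]; exact not_false)
  -- choose radii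
  have hr : ∀ z ∈ Z, ∃ r > 0, Metric.ball z r ⊆ G ∧ ∀ y ∈ Metric.ball z r ∩ Z, y = z := by
    intro z hz
    have hz' := hnoacc z (hZG hz)
    rw [mem_derivedSet, accPt_iff_nhds] at hz'
    push_neg at hz'
    obtain ⟨U, hU, hU2⟩ := hz'
    obtain ⟨r1, hr1, hball1⟩ := Metric.mem_nhds_iff.1 hU
    obtain ⟨r2, hr2, hball2⟩ := Metric.mem_nhds_iff.1 (hG.mem_nhds (hZG hz))
    refine ⟨min r1 r2, lt_min hr1 hr2, ?_, ?_⟩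
    · exact (Metric.ball_subset_ball (min_le_right _ _)).trans hball2
    · intro y hy
      exact hU2 y ⟨hball1 ((Metric.ball_subset_ball (min_le_left _ _)) hy.1), hy.2⟩
  choose! r hrpos hrG hrZ using hr
  -- choose clopen sets
  have hV : ∀ z ∈ Z, ∃ V : Set X, IsClopen V ∧ z ∈ V ∧ V ⊆ Metric.ball z (r z / 3) := by
    intro z hz
    exact h0 z _ (Metric.ball_mem_nhds z (by linarith [hrpos z hz]))
  choose! V hVclopen hVmem hVsub using hV
  -- pairwise disjointness
  have hkey : ∀ z ∈ Z, ∀ w ∈ Z, r z ≤ r w → ∀ y, y ∈ V z → y ∈ V w → z = w := by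
    intro z hz w hw hle y hyz hyw
    have h1 : dist y z < r z / 3 := hVsub z hz hyz
    have h2 : dist y w < r w / 3 := hVsub w hw hyw
    have : dist z w < r w := by
      calc dist z w ≤ dist z y + dist y w := dist_triangle _ _ _
        _ < r z / 3 + r w / 3 := by rw [dist_comm]; linarith
        _ < r w := by linarith [hrpos w hw]
    exact hrZ w hw z ⟨Metric.mem_ball.2 this, hz⟩
  have hdisj : ∀ z ∈ Z, ∀ w ∈ Z, z ≠ w → Disjoint (V z) (V w) := by
    intro z hz w hw hne
    rw [Set.disjoint_left]
    intro y hyz hyw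
    rcases le_total (r z) (r w) with h | h
    · exact hne (hkey z hz w hw h y hyz hyw)
    · exact hne ((hkey w hw z hz h y hyw hyz).symm)
  refine ⟨fun T => ⋃ z ∈ T, V z, ?_, ?_, ?_, ?_, ?_⟩
  · intro T hT
    constructor
    · intro z hz
      exact Set.mem_biUnion hz (hVmem z (hT hz))
    · intro y hy
      obtain ⟨z, hz, hyz⟩ := Set.mem_iUnion₂.1 hy
      exact hrG z (hT hz) (Metric.ball_subset_ball (by linarith [hrpos z (hT hz)]) (hVsub z (hT hz) hyz))
  · intro 𝒰 _
    ext y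
    simp only [Set.mem_iUnion, Set.mem_sUnion]
    constructor
    · rintro ⟨z, ⟨U, hU, hzU⟩, hy⟩; exact ⟨U, hU, z, hzU, hy⟩
    · rintro ⟨U, hU, z, hzU, hy⟩; exact ⟨z, ⟨U, hU, hzU⟩, hy⟩
  · intro T hT U hU hTU
    rw [Set.disjoint_left]
    intro y hyT hyU
    obtain ⟨z, hz, hyz⟩ := Set.mem_iUnion₂.1 hyT
    obtain ⟨w, hw, hyw⟩ := Set.mem_iUnion₂.1 hyU
    have hne : z ≠ w := fun h => Set.disjoint_left.1 hTU hz (h ▸ hw)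
    exact Set.disjoint_left.1 (hdisj z (hT hz) w (hU hw) hne) hyz hyw
  · intro T hT
    exact isOpen_biUnion fun z hz => (hVclopen z (hT hz)).2
  · -- G \ K T is open
    intro T hT
    rw [Metric.isOpen_iff]
    intro x ⟨hxG, hxK⟩
    by_cases hxZ : x ∈ Z
    · -- use V x
      have hxT : x ∉ T := fun h => hxK (Set.mem_biUnion h (hVmem x hxZ))
      obtain ⟨δ, hδ, hball⟩ := Metric.isOpen_iff.1 (hVclopen x hxZ).2 x (hVmem x hxZ)
      refine ⟨δ, hδ, fun y hy => ⟨?_, ?_⟩⟩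
      · exact hrG x hxZ (Metric.ball_subset_ball (by linarith [hrpos x hxZ]) (hVsub x hxZ (hball hy)))
      · intro hyK
        obtain ⟨z, hz, hyz⟩ := Set.mem_iUnion₂.1 hyK
        have : z ≠ x := fun h => hxT (h ▸ hz)
        exact Set.disjoint_left.1 (hdisj x hxZ z (hT hz) this.symm) (hball hy) hyz
    · -- x ∉ Z
      have hx' := hnoacc x hxG
      rw [mem_derivedSet, accPt_iff_nhds] at hx'
      push_neg at hx'
      obtain ⟨U, hU, hU2⟩ := hx'
      obtain ⟨ε1, hε1, hball1⟩ := Metric.mem_nhds_iff.1 hU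
      obtain ⟨ε2, hε2, hball2⟩ := Metric.mem_nhds_iff.1 (hG.mem_nhds hxG)
      set ε := min ε1 ε2 with hεdef
      have hεpos : 0 < ε := lt_min hε1 hε2
      have hεG : Metric.ball x ε ⊆ G := (Metric.ball_subset_ball (min_le_right _ _)).trans hball2
      have hεZ : ∀ z ∈ Z, ε ≤ dist x z := by
        intro z hz
        by_contra h
        push_neg at h
        have hzU : z ∈ Metric.ball x ε1 := Metric.mem_ball.2 (lt_of_lt_of_le (by rwa [dist_comm]) (min_le_left _ _))
        exact hxZ (hU2 z ⟨hball1 hzU, hz⟩ ▸ hz)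
      -- the "meeting" set is a subsingleton
      have hsub : ∀ z ∈ Z, ∀ w ∈ Z, (V z ∩ Metric.ball x (ε/4)).Nonempty →
          (V w ∩ Metric.ball x (ε/4)).Nonempty → z = w := by
        intro z hz w hw ⟨y, hyz, hyb⟩ ⟨y', hyw', hyb'⟩
        have hdz : dist y z < r z / 3 := hVsub z hz hyz
        have hdw : dist y' w < r w / 3 := hVsub w hw hyw'
        have hdyb : dist y x < ε/4 := hyb
        have hdyb' : dist y' x < ε/4 := hyb'
        have hrz : 9 * ε / 4 < r z := by
          have h1 : ε ≤ dist x z := hεZ z hz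
          have h2 : dist x z ≤ dist x y + dist y z := dist_triangle _ _ _
          rw [dist_comm x y] at h2
          linarith
        have hrw : 9 * ε / 4 < r w := by
          have h1 : ε ≤ dist x w := hεZ w hw
          have h2 : dist x w ≤ dist x y' + dist y' w := dist_triangle _ _ _
          rw [dist_comm x y'] at h2
          linarith
        by_contra hne
        rcases le_total (r z) (r w) with h | h
        · have : dist z w < r w := by
            calc dist z w ≤ dist z y + dist y x + dist x y' + dist y' w := by
                  have := dist_triangle4 z y y' w
                  have := dist_triangle y x y'
                  linarith
              _ < r z / 3 + ε/4 + ε/4 + r w / 3 := by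
                  rw [dist_comm z y, dist_comm x y']; linarith
              _ ≤ r w := by linarith
          exact hne (hrZ w hw z ⟨Metric.mem_ball.2 this, hz⟩)
        · have : dist w z < r z := by
            calc dist w z ≤ dist w y' + dist y' x + dist x y + dist y z := by
                  have := dist_triangle4 w y' y z
                  have := dist_triangle y' x y
                  linarith
              _ < r w / 3 + ε/4 + ε/4 + r z / 3 := by
                  rw [dist_comm w y', dist_comm x y]; linarith
              _ ≤ r z := by linarith
          exact hne ((hrZ z hz w ⟨Metric.mem_ball.2 this, hw⟩).symm)
      by_cases hmeet : ∃ z ∈ T, (V z ∩ Metric.ball x (ε/4)).Nonempty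
      · obtain ⟨z0, hz0, hz0m⟩ := hmeet
        -- x ∉ V z0, which is closed
        have hxV : x ∉ V z0 := fun h => hxK (Set.mem_biUnion hz0 h)
        have : IsOpen (V z0)ᶜ := (hVclopen z0 (hT hz0)).1.isOpen_compl
        obtain ⟨δ, hδ, hball⟩ := Metric.isOpen_iff.1 this x hxV
        refine ⟨min δ (ε/4), lt_min hδ (by linarith), fun y hy => ⟨?_, ?_⟩⟩
        · exact hεG (Metric.ball_subset_ball (by
            calc min δ (ε/4) ≤ ε/4 := min_le_right _ _
              _ ≤ ε := by linarith) hy)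
        · intro hyK
          obtain ⟨w, hw, hyw⟩ := Set.mem_iUnion₂.1 hyK
          have hyb : y ∈ Metric.ball x (ε/4) :=
            Metric.ball_subset_ball (min_le_right _ _) hy
          have : w = z0 := hsub w (hT hw) z0 (hT hz0) ⟨y, hyw, hyb⟩ hz0m
          exact hball (Metric.ball_subset_ball (min_le_left _ _) hy) (this ▸ hyw)
      · push_neg at hmeet
        refine ⟨ε/4, by linarith, fun y hy => ⟨?_, ?_⟩⟩
        · exact hεG (Metric.ball_subset_ball (by linarith) hy)
        · intro hyK
          obtain ⟨w, hw, hyw⟩ := Set.mem_iUnion₂.1 hyK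
          exact Set.eq_empty_iff_forall_notMem.1 (hmeet w hw) y ⟨hyw, hy⟩
end

section
/- A 0-dimensional dense-in-itself metric space X is not compact if and only if X can be partitioned into infinitely many non-empty open sets. -/
/-!
A compact space cannot be split into infinitely many disjoint non-empty open sets, since a finite
subcover would have to contain every piece. Conversely, a non-compact metric space contains an
infinite set `{xₙ}` without accumulation points. Around each `xₙ` choose a clopen set inside a ball
of radius at most `1 / (n + 1)`, small enough that these sets are pairwise disjoint; as the radii
tend to zero and the `xₙ` do not accumulate, the family is locally finite, so its union is clopen.
The clopen sets, with the complement of their union added to the first one, form the partition.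
-/

open Filter Set Metric Topology Function

theorem Pairwise.injective_of_disjoint_of_nonempty {α ι : Type*} {W : ι → Set α}
    (hdisj : Pairwise (Disjoint on W)) (hne : ∀ i, (W i).Nonempty) : Injective W := by
  intro i j hij
  by_contra h
  obtain ⟨z, hz⟩ := hne i
  exact disjoint_left.mp (hdisj h) hz (hij ▸ hz)

section OpenPartition

variable {X : Type*} [TopologicalSpace X]

def IsOpenPartition (P : Set (Set X)) : Prop :=
  (∀ O ∈ P, IsOpen O ∧ O.Nonempty) ∧ ⋃₀ P = univ ∧ P.Pairwise Disjoint

theorem IsOpenPartition.finite [CompactSpace X] {P : Set (Set X)} (hP : IsOpenPartition P) :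
    P.Finite := by
  obtain ⟨hopen, hcov, hdisj⟩ := hP
  obtain ⟨t, htP, htfin, hcovt⟩ := isCompact_univ.elim_finite_subcover_image (c := id)
    (fun O hO => (hopen O hO).1) (by simpa [sUnion_eq_biUnion] using hcov.ge)
  refine htfin.subset fun O hO => ?_
  obtain ⟨z, hz⟩ := (hopen O hO).2
  obtain ⟨O', hO't, hzO'⟩ := mem_iUnion₂.mp (hcovt (mem_univ z))
  by_contra hOt
  exact disjoint_left.mp (hdisj hO (htP hO't) fun h => hOt (h ▸ hO't)) hz hzO'

theorem isOpenPartition_range {ι : Type*} {W : ι → Set X} (hopen : ∀ i, IsOpen (W i))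
    (hne : ∀ i, (W i).Nonempty) (hcov : ⋃ i, W i = univ) (hdisj : Pairwise (Disjoint on W)) :
    IsOpenPartition (range W) :=
  ⟨forall_mem_range.2 fun i => ⟨hopen i, hne i⟩, by rwa [sUnion_range], hdisj.range_pairwise⟩

theorem LocallyFinite.exists_infinite_isOpenPartition {V : ℕ → Set X} (hfin : LocallyFinite V)
    (hclopen : ∀ n, IsClopen (V n)) (hne : ∀ n, (V n).Nonempty)
    (hdisj : Pairwise (Disjoint on V)) : ∃ P : Set (Set X), P.Infinite ∧ IsOpenPartition P := by
  set W := update V 0 (V 0 ∪ (⋃ n, V n)ᶜ)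
  have hW0 : W 0 = V 0 ∪ (⋃ n, V n)ᶜ := update_self ..
  have hW : ∀ n ≠ 0, W n = V n := fun n hn => update_of_ne hn ..
  have hWne : ∀ n, (W n).Nonempty := fun n => by
    rcases eq_or_ne n 0 with rfl | hn
    · exact hW0 ▸ (hne 0).mono subset_union_left
    · exact hW n hn ▸ hne n
  have hWdisj : Pairwise (Disjoint on W) := by
    have h0 : ∀ n ≠ 0, Disjoint (W 0) (W n) := fun n hn => by
      rw [hW0, hW n hn]
      exact (hdisj hn.symm).union_left (disjoint_compl_left.mono_right (subset_iUnion V n))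
    intro i j hij
    rcases eq_or_ne i 0 with rfl | hi
    · exact h0 j hij.symm
    rcases eq_or_ne j 0 with rfl | hj
    · exact (h0 i hi).symm
    · simpa only [onFun, hW i hi, hW j hj] using hdisj hij
  have hWopen : ∀ n, IsOpen (W n) := fun n => by
    rcases eq_or_ne n 0 with rfl | hn
    · exact hW0 ▸ (hclopen 0).isOpen.union
        (hfin.isClosed_iUnion fun n => (hclopen n).isClosed).isOpen_compl
    · exact hW n hn ▸ (hclopen n).isOpen
  have hWcov : ⋃ n, W n = univ := eq_univ_of_forall fun z => by
    by_cases hz : z ∈ ⋃ n, V n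
    · obtain ⟨n, hn⟩ := mem_iUnion.1 hz
      rcases eq_or_ne n 0 with rfl | hn0
      · exact mem_iUnion.2 ⟨0, hW0 ▸ Or.inl hn⟩
      · exact mem_iUnion.2 ⟨n, hW n hn0 ▸ hn⟩
    · exact mem_iUnion.2 ⟨0, hW0 ▸ Or.inr hz⟩
  exact ⟨_, infinite_range_of_injective (hWdisj.injective_of_disjoint_of_nonempty hWne),
    isOpenPartition_range hWopen hWne hWcov hWdisj⟩

end OpenPartition

theorem exists_infinite_forall_not_accPt {X : Type*} [TopologicalSpace X]
    [TopologicalSpace.PseudoMetrizableSpace X] [T1Space X]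
    (h : ¬CompactSpace X) : ∃ D : Set X, D.Infinite ∧ ∀ y, ¬AccPt y (𝓟 D) := by
  by_contra! H
  refine h (isCompact_univ_iff.1 ?_)
  exact (isCountablyCompact_iff_infinite_subset_has_accPt.2 fun B _ hB =>
    (H B hB).imp fun y hy => ⟨mem_univ y, hy⟩).isSeqCompact.isCompact

section Metric

variable {X : Type*} [PseudoMetricSpace X]

theorem exists_ball_inter_subset_singleton_of_not_accPt {D : Set X} {y : X}
    (h : ¬AccPt y (𝓟 D)) : ∃ r > 0, ball y r ∩ D ⊆ {y} := by
  rw [accPt_iff_nhds] at h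
  push Not at h
  obtain ⟨U, hU, hUD⟩ := h
  obtain ⟨r, hr, hball⟩ := Metric.mem_nhds_iff.1 hU
  exact ⟨r, hr, fun z hz => hUD z ⟨hball hz.1, hz.2⟩⟩

theorem locallyFinite_ball_of_tendsto_zero {x : ℕ → X} {ε : ℕ → ℝ}
    (hx : ∀ y, ∃ r > 0, {n | x n ∈ ball y r}.Finite) (hε : Tendsto ε atTop (𝓝 0)) :
    LocallyFinite fun n => ball (x n) (ε n) := by
  intro y
  obtain ⟨r, hr, hfin⟩ := hx y
  refine ⟨ball y (r / 2), ball_mem_nhds y (half_pos hr), ?_⟩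
  have hlarge : {n | r / 2 ≤ ε n}.Finite := by
    simpa [← Nat.cofinite_eq_atTop] using hε.eventually (gt_mem_nhds (half_pos hr))
  refine (hlarge.union hfin).subset fun n ⟨z, hzx, hzy⟩ => ?_
  by_contra h
  simp only [mem_union, mem_ofPred_eq, not_or, not_le] at h
  refine h.2 (mem_ball.2 ?_)
  calc dist (x n) y ≤ dist z (x n) + dist z y := dist_triangle_left ..
    _ < r / 2 + r / 2 := add_lt_add (h.1.trans' hzx) hzy
    _ = r := add_halves r

theorem pairwise_disjoint_ball_of_dist_lt {ι : Type*} {x : ι → X} {r ε : ι → ℝ}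
    (hr : ∀ m n, dist (x m) (x n) < r n → m = n) (hε : ∀ n, ε n ≤ r n / 2) :
    Pairwise (Disjoint on fun n => ball (x n) (ε n)) := by
  intro m n hmn
  refine ball_disjoint_ball (not_lt.1 fun hlt => ?_)
  rcases le_total (r m) (r n) with hle | hle
  · exact hmn (hr m n (by linarith [hε m, hε n]))
  · exact hmn (hr n m (by rw [dist_comm]; linarith [hε m, hε n])).symm

end Metric

theorem exists_locallyFinite_clopen_of_not_compactSpace {X : Type*} [MetricSpace X]
    (h0 : ∀ x : X, ∀ U ∈ 𝓝 x, ∃ V : Set X, IsClopen V ∧ x ∈ V ∧ V ⊆ U)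
    (hnc : ¬CompactSpace X) :
    ∃ V : ℕ → Set X, LocallyFinite V ∧ (∀ n, IsClopen (V n)) ∧ (∀ n, (V n).Nonempty) ∧
      Pairwise (Disjoint on V) := by
  obtain ⟨D, hDinf, hD⟩ := exists_infinite_forall_not_accPt hnc
  have hiso y := exists_ball_inter_subset_singleton_of_not_accPt (hD y)
  set x : ℕ → X := fun n => hDinf.natEmbedding _ n
  have hxD n : x n ∈ D := (hDinf.natEmbedding _ n).2
  have hxinj : Injective x := Subtype.val_injective.comp (hDinf.natEmbedding _).injective
  have hfin y : ∃ r > 0, {n | x n ∈ ball y r}.Finite := by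
    obtain ⟨r, hr, hrD⟩ := hiso y
    exact ⟨r, hr, ((finite_singleton y).preimage hxinj.injOn).subset
      fun n hn => hrD ⟨hn, hxD n⟩⟩
  choose r hr hrD using fun n => hiso (x n)
  have hsep m n (h : dist (x m) (x n) < r n) : m = n := hxinj (hrD n ⟨h, hxD m⟩)
  set ε : ℕ → ℝ := fun n => min (r n / 2) (1 / (n + 1))
  have hεpos n : 0 < ε n := lt_min (half_pos (hr n)) Nat.one_div_pos_of_nat
  have hεlim : Tendsto ε atTop (𝓝 0) :=
    squeeze_zero (fun n => (hεpos n).le) (fun n => min_le_right _ _)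
      tendsto_one_div_add_atTop_nhds_zero_nat
  choose V hVclopen hxV hVball using fun n => h0 (x n) _ (ball_mem_nhds _ (hεpos n))
  exact ⟨V, (locallyFinite_ball_of_tendsto_zero hfin hεlim).subset hVball, hVclopen,
    fun n => ⟨x n, hxV n⟩,
    (pairwise_disjoint_ball_of_dist_lt hsep fun n => min_le_left _ _).mono
      fun m n h => h.mono (hVball m) (hVball n)⟩

theorem stmt_8_general {X : Type*} [MetricSpace X]
    (h0 : ∀ x : X, ∀ U ∈ nhds x, ∃ V : Set X, IsClopen V ∧ x ∈ V ∧ V ⊆ U) :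
    ¬ CompactSpace X ↔
      ∃ P : Set (Set X), P.Infinite ∧ (∀ O ∈ P, IsOpen O ∧ O.Nonempty) ∧
        ⋃₀ P = Set.univ ∧ P.Pairwise Disjoint := by
  constructor
  · intro hnc
    obtain ⟨V, hfin, hclopen, hne, hdisj⟩ := exists_locallyFinite_clopen_of_not_compactSpace h0 hnc
    exact hfin.exists_infinite_isOpenPartition hclopen hne hdisj
  · rintro ⟨P, hPinf, hP⟩ _
    exact hPinf (IsOpenPartition.finite hP)

/-- A 0-dimensional dense-in-itself metric space is non-compact iff it can be
partitioned into infinitely many non-empty open sets. -/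
theorem stmt_8 {X : Type*} [MetricSpace X] [PerfectSpace X]
    (h0 : ∀ x : X, ∀ U ∈ nhds x, ∃ V : Set X, IsClopen V ∧ x ∈ V ∧ V ⊆ U) :
    ¬ CompactSpace X ↔
      ∃ P : Set (Set X), P.Infinite ∧ (∀ O ∈ P, IsOpen O ∧ O.Nonempty) ∧
        ⋃₀ P = Set.univ ∧ P.Pairwise Disjoint :=
  stmt_8_general h0
end

section
/- Let X be a 0-dimensional dense-in-itself metric space, G ⊆ X open, and I a non-empty countable set. Then G can be partitioned into open sets G_i (i ∈ I) such that cl(G) \ G = cl(G_i) \ G_i for each i ∈ I. -/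
open Metric Set

lemma aux_two {X : Type*} [TopologicalSpace X] [PerfectSpace X] {U : Set X} {x : X}
    (hU : U ∈ nhds x) : ∃ y ∈ U, y ≠ x := by
  have h := PerfectSpace.univ_preperfect (α := X)
  rw [preperfect_iff_nhds] at h
  obtain ⟨y, hy, hyx⟩ := h x (mem_univ x) U hU
  exact ⟨y, hy.1, hyx⟩

lemma aux_split2 {X : Type*} [MetricSpace X] [PerfectSpace X]
    (h0 : ∀ x : X, ∀ U ∈ nhds x, ∃ V : Set X, IsClopen V ∧ x ∈ V ∧ V ⊆ U)
    {C : Set X} (hC : IsClopen C) (hne : C.Nonempty) :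
    ∃ W : Set X, IsClopen W ∧ W.Nonempty ∧ W ⊆ C ∧ (C \ W).Nonempty := by
  obtain ⟨a, ha⟩ := hne
  have hCn : C ∈ nhds a := hC.isOpen.mem_nhds ha
  obtain ⟨b, hb, hba⟩ := aux_two hCn
  have hU : C \ {b} ∈ nhds a := by
    have : IsOpen (C \ {b}) := hC.isOpen.sdiff isClosed_singleton
    exact this.mem_nhds ⟨ha, by simpa using hba.symm⟩
  obtain ⟨V, hV, haV, hVsub⟩ := h0 a _ hU
  exact ⟨V, hV, ⟨a, haV⟩, hVsub.trans diff_subset,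
    ⟨b, hb, fun hbV => (hVsub hbV).2 rfl⟩⟩

lemma aux_split {X : Type*} [MetricSpace X] [PerfectSpace X]
    (h0 : ∀ x : X, ∀ U ∈ nhds x, ∃ V : Set X, IsClopen V ∧ x ∈ V ∧ V ⊆ U)
    {C : Set X} (hC : IsClopen C) (hne : C.Nonempty) (n : ℕ) :
    ∃ D : ℕ → Set X, (∀ k, IsClopen (D k)) ∧ (∀ k, n < k → D k = ∅) ∧
      (∀ k ≤ n, (D k).Nonempty) ∧ (Pairwise fun k l => Disjoint (D k) (D l)) ∧
      (⋃ k, D k) = C := by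
  induction n generalizing C with
  | zero =>
    refine ⟨fun k => if k = 0 then C else ∅, ?_, ?_, ?_, ?_, ?_⟩
    · intro k; by_cases h : k = 0 <;> simp [h, hC, isClopen_empty]
    · intro k hk
      simp only []
      rw [if_neg (by omega : ¬ k = 0)]
    · intro k hk; interval_cases k; simpa using hne
    · intro k l hkl
      by_cases h : k = 0 <;> by_cases h' : l = 0 <;>
        simp_all [Function.onFun, disjoint_left]
    · ext x
      simp only [mem_iUnion]
      constructor
      · rintro ⟨k, hk⟩
        by_cases h : k = 0
        · simpa [h] using hk
        · simp [h] at hk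
      · intro hx; exact ⟨0, by simpa using hx⟩
  | succ n ih =>
    obtain ⟨W, hW, hWne, hWC, hCWne⟩ := aux_split2 h0 hC hne
    obtain ⟨D, hD1, hD2, hD3, hD4, hD5⟩ := ih (hC.diff hW) hCWne
    refine ⟨fun k => if k = n + 1 then W else D k, ?_, ?_, ?_, ?_, ?_⟩
    · intro k; by_cases h : k = n + 1 <;> simp [h, hW, hD1]
    · intro k hk
      have h1 : k ≠ n + 1 := by omega
      have h2 : n < k := by omega
      simp [h1, hD2 k h2]
    · intro k hk
      by_cases h : k = n + 1
      · simpa [h] using hWne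
      · have : k ≤ n := by omega
        simpa [h] using hD3 k this
    · intro k l hkl
      have hDW : ∀ m, Disjoint (D m) W := by
        intro m
        have : D m ⊆ C \ W := hD5 ▸ subset_iUnion D m
        exact disjoint_left.mpr fun x hx hxW => (this hx).2 hxW
      by_cases h : k = n + 1 <;> by_cases h' : l = n + 1
      · omega
      · simpa [h, h'] using (hDW l).symm
      · simpa [h, h'] using hDW k
      · simpa [h, h'] using hD4 hkl
    · ext x
      simp only [mem_iUnion]
      constructor
      · rintro ⟨k, hk⟩
        by_cases h : k = n + 1
        · exact hWC (by simpa [h] using hk)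
        · have : x ∈ ⋃ k, D k := mem_iUnion.mpr ⟨k, by simpa [h] using hk⟩
          exact (hD5 ▸ this).1
      · intro hx
        by_cases h : x ∈ W
        · exact ⟨n + 1, by simpa using h⟩
        · have : x ∈ ⋃ k, D k := hD5 ▸ ⟨hx, h⟩
          obtain ⟨k, hk⟩ := mem_iUnion.mp this
          have hkn : k ≠ n + 1 := by
            intro hk'
            rw [hk', hD2 (n+1) (by omega)] at hk
            exact hk
          exact ⟨k, by simpa [hkn] using hk⟩

lemma aux_sep {X : Type*} [MetricSpace X] (R : Set X) {δ : ℝ} (hδ : 0 < δ) :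
    ∃ S ⊆ R, S.Pairwise (fun a b => δ ≤ dist a b) ∧
      ∀ x ∈ R, ∃ s ∈ S, dist x s < δ := by
  have hz : ∀ c ⊆ {S : Set X | S ⊆ R ∧ S.Pairwise (fun a b => δ ≤ dist a b)},
      IsChain (· ⊆ ·) c →
      ∃ ub ∈ {S : Set X | S ⊆ R ∧ S.Pairwise (fun a b => δ ≤ dist a b)}, ∀ s ∈ c, s ⊆ ub := by
    intro c hc hchain
    refine ⟨⋃₀ c, ⟨?_, ?_⟩, fun s hs => subset_sUnion_of_mem hs⟩
    · exact sUnion_subset fun s hs => (hc hs).1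
    · intro a ha b hb hab
      obtain ⟨s, hs, has⟩ := ha
      obtain ⟨t, ht, hbt⟩ := hb
      rcases hchain.total hs ht with h | h
      · exact (hc ht).2 (h has) hbt hab
      · exact (hc hs).2 has (h hbt) hab
  obtain ⟨S, hS⟩ := zorn_subset {S | S ⊆ R ∧ S.Pairwise (fun a b => δ ≤ dist a b)} hz
  · refine ⟨S, hS.prop.1, hS.prop.2, ?_⟩
    intro x hx
    by_contra h
    push_neg at h
    have hxS : x ∉ S := fun hxS => absurd (h x hxS) (by simp [hδ.not_ge])
    have : insert x S ∈ {S | S ⊆ R ∧ S.Pairwise (fun a b => δ ≤ dist a b)} := by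
      constructor
      · exact insert_subset hx hS.prop.1
      · intro a ha b hb hab
        rcases ha with rfl | ha <;> rcases hb with rfl | hb
        · exact absurd rfl hab
        · exact h _ hb
        · rw [dist_comm]; exact h _ ha
        · exact hS.prop.2 ha hb hab
    have := hS.eq_of_subset this (subset_insert x S)
    exact hxS (this ▸ mem_insert x S)

lemma aux_discrete_closed {X : Type*} [MetricSpace X] (S : Set X) (V : X → Set X)
    {r : ℝ} (hr : 0 < r) (hcl : ∀ s ∈ S, IsClosed (V s))
    (hdisc : ∀ x : X, ∀ s ∈ S, ∀ t ∈ S,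
      (V s ∩ ball x r).Nonempty → (V t ∩ ball x r).Nonempty → s = t) :
    IsClosed (⋃ s ∈ S, V s) := by
  rw [← isOpen_compl_iff, isOpen_iff_mem_nhds]
  intro x hx
  simp only [mem_compl_iff, mem_iUnion, not_exists] at hx
  by_cases h : ∃ s ∈ S, (V s ∩ ball x r).Nonempty
  · obtain ⟨s, hs, hmeet⟩ := h
    have hxVs : x ∉ V s := hx s hs
    have : IsOpen (V s)ᶜ := (hcl s hs).isOpen_compl
    obtain ⟨r', hr', hball⟩ := Metric.isOpen_iff.mp this x hxVs
    refine mem_nhds_iff.mpr ⟨ball x (min r r'), ?_, isOpen_ball,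
      mem_ball_self (lt_min hr hr')⟩
    intro y hy
    simp only [mem_compl_iff, mem_iUnion, not_exists]
    intro t ht hyt
    have : t = s := hdisc x t ht s hs ⟨y, hyt, ball_subset_ball (min_le_left _ _) hy⟩ hmeet
    exact hball (ball_subset_ball (min_le_right _ _) hy) (this ▸ hyt)
  · push_neg at h
    refine mem_nhds_iff.mpr ⟨ball x r, ?_, isOpen_ball, mem_ball_self hr⟩
    intro y hy
    simp only [mem_compl_iff, mem_iUnion, not_exists]
    intro t ht hyt
    exact Set.eq_empty_iff_forall_notMem.mp (h t ht) y ⟨hyt, hy⟩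
/-- In a 0-dimensional dense-in-itself metric space, any open `G` can be partitioned
into open sets `Gs i` (`i` in a non-empty countable index set) with
`cl G \ G = cl (Gs i) \ Gs i` for each `i`. -/
theorem stmt_9 {X : Type*} [MetricSpace X] [PerfectSpace X]
    (h0 : ∀ x : X, ∀ U ∈ nhds x, ∃ V : Set X, IsClopen V ∧ x ∈ V ∧ V ⊆ U)
    {G : Set X} (hG : IsOpen G) (I : Type*) [Countable I] [Nonempty I] :
    ∃ Gs : I → Set X, (∀ i, IsOpen (Gs i)) ∧ Pairwise (Function.onFun Disjoint Gs) ∧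
      (⋃ i, Gs i) = G ∧ ∀ i, closure G \ G = closure (Gs i) \ Gs i := by
  classical
  obtain ⟨e, he⟩ := exists_surjective_nat I
  set i0 : I := e 0 with hi0def
  by_cases hF : closure G \ G = ∅
  · -- G is clopen
    refine ⟨fun i => if i = i0 then G else ∅, ?_, ?_, ?_, ?_⟩
    · intro i; by_cases h : i = i0 <;> simp [h, hG]
    · intro i j hij
      by_cases h : i = i0 <;> by_cases h' : j = i0 <;>
        simp_all [Function.onFun, disjoint_left]
    · ext x
      simp only [mem_iUnion]
      constructor
      · rintro ⟨i, hi⟩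
        by_cases h : i = i0
        · simpa [h] using hi
        · simp [h] at hi
      · intro hx; exact ⟨i0, by simpa using hx⟩
    · intro i
      by_cases h : i = i0
      · simp [h]
      · simp [h, hF]
  · -- main case
    have hGc : Gᶜ.Nonempty := by
      obtain ⟨p, hp⟩ := nonempty_iff_ne_empty.mpr hF
      exact ⟨p, hp.2⟩
    set c : ℕ → ℝ := fun n => (2⁻¹ : ℝ) ^ n with hcdef
    have hc_pos : ∀ n, 0 < c n := fun n => pow_pos (by norm_num) n
    have hc_lt : ∀ {m n : ℕ}, m < n → c n < c m := fun h =>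
      pow_lt_pow_right_of_lt_one₀ (by norm_num) (by norm_num) h
    have hc_le : ∀ {m n : ℕ}, m ≤ n → c n ≤ c m := by
      intro m n h
      rcases h.lt_or_eq with h | rfl
      · exact (hc_lt h).le
      · rfl
    have hc_small : ∀ ε : ℝ, 0 < ε → ∃ n, c n < ε := fun ε hε =>
      exists_pow_lt_of_lt_one hε (by norm_num)
    have hc_add : ∀ n k, c (n + k) = c n * c k := fun n k => pow_add _ n k
    set ρ : X → ℝ := fun x => Metric.infDist x Gᶜ with hρdef
    have hρpos : ∀ x ∈ G, 0 < ρ x := by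
      intro x hx
      exact (hG.isClosed_compl.notMem_iff_infDist_pos hGc).mp (by simpa using hx)
    have hρball : ∀ x, ball x (ρ x) ⊆ G := by
      intro x y hy
      by_contra h
      have h1 : ρ x ≤ dist x y := Metric.infDist_le_dist_of_mem h
      rw [mem_ball, dist_comm] at hy
      exact absurd h1 (not_le.mpr hy)
    have hρlip : ∀ x y : X, ρ x ≤ ρ y + dist x y := fun x y =>
      Metric.infDist_le_infDist_add_dist
    have hρdist : ∀ (x : X), ∀ p ∈ Gᶜ, ρ x ≤ dist x p := fun x p hp =>
      Metric.infDist_le_dist_of_mem hp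
    -- the one-scale construction
    have hstep : ∀ (n : ℕ) (U : Set X), ∃ SV : Set X × (X → Set X),
        SV.1 ⊆ {x | x ∈ G ∧ ρ x < c (n+10) ∧ x ∉ U} ∧
        SV.1.Pairwise (fun a b => c (n+2) ≤ dist a b) ∧
        (∀ x ∈ G, ρ x < c (n+10) → x ∉ U → ∃ s ∈ SV.1, dist x s < c (n+2)) ∧
        (∀ s ∈ SV.1, IsClopen (SV.2 s) ∧ s ∈ SV.2 s ∧
          SV.2 s ⊆ ball s (c (n+10)) ∧ SV.2 s ⊆ G) := by
      intro n U
      obtain ⟨S, hSR, hSsep, hScov⟩ :=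
        aux_sep (X := X) {x | x ∈ G ∧ ρ x < c (n+10) ∧ x ∉ U} (hc_pos (n+2))
      have hVex : ∀ s : X, ∃ Vs : Set X, s ∈ S →
          IsClopen Vs ∧ s ∈ Vs ∧ Vs ⊆ ball s (c (n+10)) ∧ Vs ⊆ G := by
        intro s
        by_cases hs : s ∈ S
        · have hsG : s ∈ G := (hSR hs).1
          have hr : 0 < min (ρ s) (c (n+10)) := lt_min (hρpos s hsG) (hc_pos _)
          obtain ⟨V, hV1, hV2, hV3⟩ := h0 s (ball s (min (ρ s) (c (n+10))))
            (ball_mem_nhds s hr)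
          refine ⟨V, fun _ => ⟨hV1, hV2, ?_, ?_⟩⟩
          · exact hV3.trans (ball_subset_ball (min_le_right _ _))
          · exact (hV3.trans (ball_subset_ball (min_le_left _ _))).trans (hρball s)
        · exact ⟨∅, fun h => absurd h hs⟩
      choose V hV using hVex
      exact ⟨(S, V), hSR, hSsep, fun x hx h1 h2 => hScov x ⟨hx, h1, h2⟩, fun s hs => hV s hs⟩
    choose step hstep1 hstep2 hstep3 hstep4 using hstep
    obtain ⟨Un, hU0, hUsucc⟩ : ∃ U : ℕ → Set X, U 0 = ∅ ∧
        ∀ n, U (n+1) = U n ∪ ⋃ s ∈ (step n (U n)).1, (step n (U n)).2 s :=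
      ⟨fun n => Nat.rec ∅
        (fun m Um => Um ∪ ⋃ s ∈ (step m Um).1, (step m Um).2 s) n, rfl, fun n => rfl⟩
    set S : ℕ → Set X := fun n => (step n (Un n)).1 with hSdef
    set V : ℕ → X → Set X := fun n => (step n (Un n)).2 with hVdef
    have hUsucc' : ∀ n, Un (n+1) = Un n ∪ ⋃ s ∈ S n, V n s := hUsucc
    have hS_sub : ∀ n, ∀ s ∈ S n, s ∈ G ∧ ρ s < c (n+10) ∧ s ∉ Un n :=
      fun n s hs => hstep1 n (Un n) hs
    have hS_sep : ∀ n, (S n).Pairwise (fun a b => c (n+2) ≤ dist a b) :=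
      fun n => hstep2 n (Un n)
    have hS_cov : ∀ n, ∀ x ∈ G, ρ x < c (n+10) → x ∉ Un n →
        ∃ s ∈ S n, dist x s < c (n+2) := fun n => hstep3 n (Un n)
    have hVcl : ∀ n, ∀ s ∈ S n, IsClopen (V n s) := fun n s hs => (hstep4 n (Un n) s hs).1
    have hVmem : ∀ n, ∀ s ∈ S n, s ∈ V n s := fun n s hs => (hstep4 n (Un n) s hs).2.1
    have hVball : ∀ n, ∀ s ∈ S n, V n s ⊆ ball s (c (n+10)) :=
      fun n s hs => (hstep4 n (Un n) s hs).2.2.1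
    have hVG : ∀ n, ∀ s ∈ S n, V n s ⊆ G := fun n s hs => (hstep4 n (Un n) s hs).2.2.2
    -- basic numeric facts
    have hρV : ∀ n, ∀ s ∈ S n, ∀ y ∈ V n s, ρ y < c (n+9) := by
      intro n s hs y hy
      have h1 : dist y s < c (n+10) := hVball n s hs hy
      have h2 : ρ y ≤ ρ s + dist y s := hρlip y s
      have h3 : ρ s < c (n+10) := (hS_sub n s hs).2.1
      have : c (n+10) + c (n+10) ≤ c (n+9) := by
        rw [hc_add n 10, hc_add n 9]
        nlinarith [hc_pos n, (by norm_num [hcdef] : c 10 + c 10 ≤ c 9)]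
      linarith
    have hVdisj : ∀ n, ∀ s ∈ S n, ∀ t ∈ S n, s ≠ t → Disjoint (V n s) (V n t) := by
      intro n s hs t ht hst
      rw [disjoint_left]
      intro y hys hyt
      have h1 : dist y s < c (n+10) := hVball n s hs hys
      have h2 : dist y t < c (n+10) := hVball n t ht hyt
      have h3 : c (n+2) ≤ dist s t := hS_sep n hs ht hst
      have h4 : dist s t ≤ dist y s + dist y t := dist_triangle_left s t y
      have : c (n+10) + c (n+10) ≤ c (n+2) := by
        rw [hc_add n 10, hc_add n 2]
        nlinarith [hc_pos n, (by norm_num [hcdef] : c 10 + c 10 ≤ c 2)]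
      linarith
    have hMclosed : ∀ n, IsClosed (⋃ s ∈ S n, V n s) := by
      intro n
      apply aux_discrete_closed (S n) (V n) (hc_pos (n+4))
        (fun s hs => (hVcl n s hs).isClosed)
      intro x s hs t ht ⟨y, hys, hyx⟩ ⟨z, hzt, hzx⟩
      by_contra hst
      have h3 : c (n+2) ≤ dist s t := hS_sep n hs ht hst
      have h4 : dist s t ≤ dist s y + dist y x + dist x z + dist z t := by
        have t1 := dist_triangle4 s y x z
        have t2 := dist_triangle s z t
        linarith
      have h6 : dist s y < c (n+10) := by rw [dist_comm]; exact hVball n s hs hys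
      have h7 : dist z t < c (n+10) := hVball n t ht hzt
      have h8 : dist y x < c (n+4) := hyx
      have h9 : dist x z < c (n+4) := by rw [dist_comm]; exact hzx
      have : c (n+10) + c (n+4) + c (n+4) + c (n+10) ≤ c (n+2) := by
        rw [hc_add n 10, hc_add n 4, hc_add n 2]
        nlinarith [hc_pos n, (by norm_num [hcdef] : c 10 + c 4 + c 4 + c 10 ≤ c 2)]
      linarith
    have hMopen : ∀ n, IsOpen (⋃ s ∈ S n, V n s) :=
      fun n => isOpen_biUnion fun s hs => (hVcl n s hs).isOpen
    have hUclopen : ∀ n, IsClopen (Un n) := by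
      intro n
      induction n with
      | zero => rw [hU0]; exact isClopen_empty
      | succ m ih =>
        rw [hUsucc' m]
        exact ⟨ih.isClosed.union (hMclosed m), ih.isOpen.union (hMopen m)⟩
    have hUG : ∀ n, Un n ⊆ G := by
      intro n
      induction n with
      | zero => rw [hU0]; exact empty_subset G
      | succ m ih =>
        rw [hUsucc' m]
        exact union_subset ih (iUnion₂_subset fun s hs => hVG m s hs)
    have hUmono : ∀ m n, m ≤ n → Un m ⊆ Un n := by
      intro m n h
      induction n with
      | zero => rw [Nat.le_zero.mp h]
      | succ k ih =>
        by_cases hm : m ≤ k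
        · exact (ih hm).trans (by rw [hUsucc' k]; exact subset_union_left)
        · have hmk : m = k + 1 := by omega
          subst hmk
          exact subset_rfl
    have hVU : ∀ m n, m < n → ∀ s ∈ S m, V m s ⊆ Un n := by
      intro m n hmn s hs
      have h1 : V m s ⊆ Un (m+1) := by
        rw [hUsucc' m]
        exact (subset_biUnion_of_mem hs).trans subset_union_right
      exact h1.trans (hUmono (m+1) n hmn)
    have hUn_struct : ∀ n, ∀ y ∈ Un n, ∃ m, m < n ∧ ∃ s ∈ S m, y ∈ V m s := by
      intro n
      induction n with
      | zero => rw [hU0]; exact fun y hy => absurd hy (notMem_empty y)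
      | succ k ih =>
        intro y hy
        rw [hUsucc' k] at hy
        rcases hy with hy | hy
        · obtain ⟨m, hm, hrest⟩ := ih y hy
          exact ⟨m, by omega, hrest⟩
        · obtain ⟨s, hs, hys⟩ := mem_iUnion₂.mp hy
          exact ⟨k, by omega, s, hs, hys⟩
    -- split each piece into colored clopen subpieces
    have hDex : ∀ (n : ℕ) (s : X), ∃ D : ℕ → Set X, s ∈ S n →
        (∀ k, IsClopen (D k)) ∧ (∀ k, n < k → D k = ∅) ∧ (∀ k ≤ n, (D k).Nonempty) ∧
        (Pairwise fun k l => Disjoint (D k) (D l)) ∧ (⋃ k, D k) = V n s \ Un n := by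
      intro n s
      by_cases hs : s ∈ S n
      · have hclopen : IsClopen (V n s \ Un n) := by
          constructor
          · rw [Set.diff_eq]
            exact (hVcl n s hs).isClosed.inter (hUclopen n).isOpen.isClosed_compl
          · exact (hVcl n s hs).isOpen.sdiff (hUclopen n).isClosed
        have hne : (V n s \ Un n).Nonempty :=
          ⟨s, hVmem n s hs, (hS_sub n s hs).2.2⟩
        obtain ⟨D, hD1, hD2, hD3, hD4, hD5⟩ := aux_split h0 hclopen hne n
        exact ⟨D, fun _ => ⟨hD1, hD2, hD3, hD4, hD5⟩⟩
      · exact ⟨fun _ => ∅, fun h => absurd h hs⟩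
    choose D hD using hDex
    have hDcl : ∀ n s, s ∈ S n → ∀ k, IsClopen (D n s k) := fun n s hs k => (hD n s hs).1 k
    have hDne : ∀ n s, s ∈ S n → ∀ k, k ≤ n → (D n s k).Nonempty :=
      fun n s hs k hk => (hD n s hs).2.2.1 k hk
    have hDpair : ∀ n s, s ∈ S n → Pairwise fun k l => Disjoint (D n s k) (D n s l) :=
      fun n s hs => (hD n s hs).2.2.2.1
    have hDunion : ∀ n s, s ∈ S n → (⋃ k, D n s k) = V n s \ Un n :=
      fun n s hs => (hD n s hs).2.2.2.2
    have hDsub : ∀ n s, s ∈ S n → ∀ k, D n s k ⊆ V n s \ Un n :=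
      fun n s hs k => (hDunion n s hs) ▸ subset_iUnion _ k
    have hDG : ∀ n s, s ∈ S n → ∀ k, D n s k ⊆ G :=
      fun n s hs k => ((hDsub n s hs k).trans diff_subset).trans (hVG n s hs)
    -- global disjointness of subpieces
    have hDDlt : ∀ n s k n' s' k', s ∈ S n → s' ∈ S n' → n < n' →
        Disjoint (D n s k) (D n' s' k') := by
      intro n s k n' s' k' hs hs' h
      have h1 : D n s k ⊆ Un n' := (hDsub n s hs k).trans (diff_subset.trans (hVU n n' h s hs))
      refine disjoint_left.mpr fun y hy hy' => ?_
      exact ((hDsub n' s' hs' k') hy').2 (h1 hy)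
    have hDD : ∀ n s k n' s' k', s ∈ S n → s' ∈ S n' → ¬(n = n' ∧ s = s' ∧ k = k') →
        Disjoint (D n s k) (D n' s' k') := by
      intro n s k n' s' k' hs hs' hne3
      rcases Nat.lt_trichotomy n n' with h | h | h
      · exact hDDlt n s k n' s' k' hs hs' h
      · subst h
        by_cases hss : s = s'
        · subst hss
          have hkk : k ≠ k' := fun hk => hne3 ⟨rfl, rfl, hk⟩
          exact hDpair n s hs hkk
        · exact (hVdisj n s hs s' hs' hss).mono
            ((hDsub n s hs k).trans diff_subset) ((hDsub n s' hs' k').trans diff_subset)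
      · exact (hDDlt n' s' k' n s k hs' hs h).symm
    -- the colored classes
    set B : Set X := ⋃ n, ⋃ s ∈ S n, ⋃ k, ⋃ (_ : e k ≠ i0), D n s k with hBdef
    have hBmem : ∀ y, y ∈ B ↔ ∃ n, ∃ s ∈ S n, ∃ k, e k ≠ i0 ∧ y ∈ D n s k := by
      intro y
      simp only [hBdef, mem_iUnion, exists_prop]
    set Gs : I → Set X := fun i =>
      if i = i0 then G \ B else ⋃ n, ⋃ s ∈ S n, ⋃ k, ⋃ (_ : e k = i), D n s k with hGsdef
    have hGs0 : Gs i0 = G \ B := by simp [hGsdef]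
    have hGsmem : ∀ i, i ≠ i0 → ∀ y,
        (y ∈ Gs i ↔ ∃ n, ∃ s ∈ S n, ∃ k, e k = i ∧ y ∈ D n s k) := by
      intro i hi y
      simp only [hGsdef, if_neg hi, mem_iUnion, exists_prop]
    have hBsubG : B ⊆ G := by
      intro y hy
      obtain ⟨n, s, hs, k, _, hyD⟩ := (hBmem y).mp hy
      exact hDG n s hs k hyD
    have hGsG : ∀ i, Gs i ⊆ G := by
      intro i y hy
      by_cases hi : i = i0
      · subst hi; rw [hGs0] at hy; exact hy.1
      · obtain ⟨n, s, hs, k, _, hyD⟩ := (hGsmem i hi y).mp hy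
        exact hDG n s hs k hyD
    have hDGs : ∀ n s k, s ∈ S n → D n s k ⊆ Gs (e k) := by
      intro n s k hs y hy
      by_cases h : e k = i0
      · rw [h, hGs0]
        refine ⟨hDG n s hs k hy, fun hyB => ?_⟩
        obtain ⟨n', s', hs', k', hek', hyD'⟩ := (hBmem y).mp hyB
        have hne3 : ¬(n = n' ∧ s = s' ∧ k = k') := fun ⟨_, _, h3⟩ => hek' (h3 ▸ h)
        exact (disjoint_left.mp (hDD n s k n' s' k' hs hs' hne3) hy) hyD'
      · exact (hGsmem (e k) h y).mpr ⟨n, s, hs, k, rfl, hy⟩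
    -- the separating neighbourhood lemma
    have hWa : ∀ x ∈ G, x ∉ B → ∃ W : Set X, IsOpen W ∧ x ∈ W ∧ W ⊆ G ∧ W ∩ B = ∅ := by
      intro x hxG hxB
      by_cases hpiece : ∃ n, ∃ s ∈ S n, x ∈ V n s
      · obtain ⟨s, hs, hxV⟩ := Nat.find_spec hpiece
        set m := Nat.find hpiece with hmdef
        have hxU : x ∉ Un m := by
          intro hxU
          obtain ⟨m', hm', t, ht, hxt⟩ := hUn_struct m x hxU
          exact Nat.find_min hpiece hm' ⟨t, ht, hxt⟩
        have hxC : x ∈ ⋃ k, D m s k := by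
          rw [hDunion m s hs]; exact ⟨hxV, hxU⟩
        obtain ⟨k, hk⟩ := mem_iUnion.mp hxC
        have hek : e k = i0 := by
          by_contra h
          exact hxB ((hBmem x).mpr ⟨m, s, hs, k, h, hk⟩)
        refine ⟨D m s k, (hDcl m s hs k).isOpen, hk, hDG m s hs k, ?_⟩
        rw [eq_empty_iff_forall_notMem]
        rintro y ⟨hyD, hyB⟩
        obtain ⟨n', s', hs', k', hek', hyD'⟩ := (hBmem y).mp hyB
        have hne3 : ¬(m = n' ∧ s = s' ∧ k = k') := fun ⟨_, _, h3⟩ => hek' (h3 ▸ hek)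
        exact (disjoint_left.mp (hDD m s k n' s' k' hs hs' hne3) hyD) hyD'
      · push_neg at hpiece
        have hρx := hρpos x hxG
        obtain ⟨N, hN⟩ := hc_small (ρ x / 2) (by linarith)
        have hr0pos : 0 < min (ρ x / 2) (c (N+4)) := lt_min (by linarith) (hc_pos _)
        refine ⟨ball x (min (ρ x / 2) (c (N+4))) \ ⋃ m ∈ Finset.range N, ⋃ s ∈ S m, V m s,
          ?_, ?_, ?_, ?_⟩
        · exact isOpen_ball.sdiff
            ((Finset.range N).finite_toSet.isClosed_biUnion fun m _ => hMclosed m)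
        · refine ⟨mem_ball_self hr0pos, ?_⟩
          simp only [mem_iUnion, not_exists]
          intro m _ s hs hx
          exact hpiece m s hs hx
        · intro y hy
          refine hρball x (ball_subset_ball ?_ hy.1)
          calc min (ρ x / 2) (c (N+4)) ≤ ρ x / 2 := min_le_left _ _
            _ ≤ ρ x := by linarith
        · rw [eq_empty_iff_forall_notMem]
          rintro y ⟨⟨hyball, hyout⟩, hyB⟩
          obtain ⟨n, s, hs, k, _, hyD⟩ := (hBmem y).mp hyB
          have hyV : y ∈ V n s := ((hDsub n s hs k) hyD).1
          by_cases hn : n < N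
          · refine hyout ?_
            simp only [mem_iUnion, exists_prop]
            exact ⟨n, by simpa using hn, s, hs, hyV⟩
          · push_neg at hn
            have h1 : ρ y < c (n+9) := hρV n s hs y hyV
            have h2 : c (n+9) ≤ c N := hc_le (by omega)
            have h3 : ρ x ≤ ρ y + dist x y := hρlip x y
            have h4 : dist x y < ρ x / 2 := by
              rw [dist_comm]
              exact lt_of_lt_of_le hyball (min_le_left _ _)
            linarith
    -- final assembly
    refine ⟨Gs, ?_, ?_, ?_, ?_⟩
    · intro i
      by_cases hi : i = i0
      · subst hi
        rw [hGs0, isOpen_iff_mem_nhds]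
        intro x hx
        obtain ⟨W, hW1, hW2, hW3, hW4⟩ := hWa x hx.1 hx.2
        refine Filter.mem_of_superset (hW1.mem_nhds hW2) fun y hy => ⟨hW3 hy, fun hyB => ?_⟩
        exact (eq_empty_iff_forall_notMem.mp hW4) y ⟨hy, hyB⟩
      · rw [hGsdef]
        simp only [if_neg hi]
        exact isOpen_iUnion fun n => isOpen_biUnion fun s hs =>
          isOpen_iUnion fun k => isOpen_iUnion fun _ => (hDcl n s hs k).isOpen
    · intro i j hij
      rw [Function.onFun, disjoint_left]
      intro y hyi hyj
      by_cases hi : i = i0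
      · subst hi
        rw [hGs0] at hyi
        have hj : j ≠ i0 := hij.symm
        obtain ⟨n, s, hs, k, hek, hyD⟩ := (hGsmem j hj y).mp hyj
        exact hyi.2 ((hBmem y).mpr ⟨n, s, hs, k, hek ▸ hj, hyD⟩)
      · by_cases hj : j = i0
        · subst hj
          rw [hGs0] at hyj
          obtain ⟨n, s, hs, k, hek, hyD⟩ := (hGsmem i hi y).mp hyi
          exact hyj.2 ((hBmem y).mpr ⟨n, s, hs, k, hek ▸ hi, hyD⟩)
        · obtain ⟨n, s, hs, k, hek, hyD⟩ := (hGsmem i hi y).mp hyi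
          obtain ⟨n', s', hs', k', hek', hyD'⟩ := (hGsmem j hj y).mp hyj
          have hne3 : ¬(n = n' ∧ s = s' ∧ k = k') := by
            rintro ⟨_, _, rfl⟩
            exact hij (hek ▸ hek')
          exact (disjoint_left.mp (hDD n s k n' s' k' hs hs' hne3) hyD) hyD'
    · apply Subset.antisymm
      · exact iUnion_subset hGsG
      · intro x hx
        by_cases hxB : x ∈ B
        · obtain ⟨n, s, hs, k, _, hxD⟩ := (hBmem x).mp hxB
          exact mem_iUnion.mpr ⟨e k, hDGs n s k hs hxD⟩
        · exact mem_iUnion.mpr ⟨i0, hGs0 ▸ ⟨hx, hxB⟩⟩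
    · intro i
      apply Subset.antisymm
      · rintro p ⟨hpcl, hpG⟩
        refine ⟨?_, fun hpGs => hpG (hGsG i hpGs)⟩
        rw [Metric.mem_closure_iff]
        intro ε hε
        obtain ⟨k, hk⟩ := he i
        obtain ⟨n₁, hn₁⟩ := hc_small (ε / 2) (by linarith)
        have hpU : p ∉ Un (max k n₁) := fun h => hpG (hUG _ h)
        obtain ⟨δ, hδpos, hδ⟩ :=
          Metric.isOpen_iff.mp (hUclopen (max k n₁)).isClosed.isOpen_compl p hpU
        have hmin : 0 < min δ (c (max k n₁ + 12)) := lt_min hδpos (hc_pos _)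
        obtain ⟨y, hyG, hpy⟩ := Metric.mem_closure_iff.mp hpcl _ hmin
        have hyU : y ∉ Un (max k n₁) := by
          refine hδ ?_
          rw [mem_ball, dist_comm]
          exact lt_of_lt_of_le hpy (min_le_left _ _)
        have hρy : ρ y < c (max k n₁ + 10) := by
          have h1 : ρ y ≤ dist y p := hρdist y p hpG
          have h2 : dist y p < c (max k n₁ + 12) := by
            rw [dist_comm]; exact lt_of_lt_of_le hpy (min_le_right _ _)
          exact lt_of_le_of_lt (h1.trans h2.le) (hc_lt (by omega))
        obtain ⟨s, hs, hys⟩ := hS_cov (max k n₁) y hyG hρy hyU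
        obtain ⟨z, hz⟩ := hDne (max k n₁) s hs k (le_max_left _ _)
        refine ⟨z, by have := hDGs (max k n₁) s k hs hz; rwa [hk] at this, ?_⟩
        have h1 : dist p y < c (max k n₁ + 12) := lt_of_lt_of_le hpy (min_le_right _ _)
        have h2 : dist y s < c (max k n₁ + 2) := hys
        have h3 : dist s z < c (max k n₁ + 10) := by
          rw [dist_comm]
          exact hVball (max k n₁) s hs ((hDsub (max k n₁) s hs k) hz).1
        have h4 : dist p z ≤ dist p y + dist y s + dist s z := dist_triangle4 p y s z
        have h5 : c (max k n₁ + 12) + c (max k n₁ + 2) + c (max k n₁ + 10)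
            ≤ c (max k n₁) := by
          rw [hc_add (max k n₁) 12, hc_add (max k n₁) 2, hc_add (max k n₁) 10]
          nlinarith [mul_le_mul_of_nonneg_left
            (by norm_num [hcdef] : c 12 + c 2 + c 10 ≤ (1:ℝ)) (hc_pos (max k n₁)).le]
        have h6 : c (max k n₁) ≤ c n₁ := hc_le (le_max_right _ _)
        linarith
      · rintro y ⟨hycl, hyGs⟩
        refine ⟨closure_mono (hGsG i) hycl, fun hyG => ?_⟩
        by_cases hyB : y ∈ B
        · obtain ⟨n, s, hs, k, hek, hyD⟩ := (hBmem y).mp hyB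
          by_cases hik : e k = i
          · exact hyGs (hik ▸ hDGs n s k hs hyD)
          · have hsubc : Gs i ⊆ (D n s k)ᶜ := by
              intro w hw hwD
              by_cases hi : i = i0
              · subst hi
                rw [hGs0] at hw
                exact hw.2 ((hBmem w).mpr ⟨n, s, hs, k, hek, hwD⟩)
              · obtain ⟨n', s', hs', k', hek', hwD'⟩ := (hGsmem i hi w).mp hw
                have hne3 : ¬(n' = n ∧ s' = s ∧ k' = k) := by
                  rintro ⟨_, _, rfl⟩
                  exact hik hek'
                exact (disjoint_left.mp (hDD n' s' k' n s k hs' hs hne3) hwD') hwD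
            exact closure_minimal hsubc (hDcl n s hs k).isOpen.isClosed_compl hycl hyD
        · have hii : i ≠ i0 := by
            intro h
            subst h
            exact hyGs (hGs0 ▸ ⟨hyG, hyB⟩)
          obtain ⟨W, hW1, hW2, hW3, hW4⟩ := hWa y hyG hyB
          obtain ⟨w, hwW, hwGs⟩ := _root_.mem_closure_iff.mp hycl W hW1 hW2
          have hwB : w ∈ B := by
            obtain ⟨n, s, hs, k, hek, hwD⟩ := (hGsmem i hii w).mp hwGs
            exact (hBmem w).mpr ⟨n, s, hs, k, hek ▸ hii, hwD⟩
          exact (eq_empty_iff_forall_notMem.mp hW4) w ⟨hwW, hwB⟩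
end

section
/- Let X be a 0-dimensional dense-in-itself metric space, I a non-empty countable set, and ε > 0. Then any non-empty open G ⊆ X can be partitioned into a non-empty set B and non-empty open sets G_i (i ∈ I) such that: (1) cl(G) \ ⋃_{i∈I} G_i = cl(B) = cl(G_i) \ G_i for each i ∈ I; (2) G ∩ d(B) = ∅; (3) d(x, B) < ε for every x ∈ G. -/
/-!
Let `ρ x = min ε (dist x Gᶜ)`. A maximal subset `B` of `G` whose points are `ρ`-separated
(`min (ρ b) (ρ b') ≤ dist b b'`) is `ε`-dense in `G`; since `ρ` is 1-Lipschitz, every `x ∈ G` has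
at most one point of `B` within `ρ x / 3`, so `B` has no accumulation point in `G`, while `ρ → 0`
at `∂G` makes `B` accumulate at every point of `∂G`. Hence `U = G \ B` is open, and as `X` has
no isolated points, `cl U = cl G`, so that `cl U \ U = cl B`.

It remains to split `U` into open pieces indexed by `I` each of which accumulates at every point
of `cl U \ U`. Zero-dimensionality gives clopen layers `T t ⊆ U`, pairwise disjoint, lying within
`1 / (t + 1)` of `Uᶜ` and coming within `1 / (t + 1)` of every point of `cl U \ U`: `T t` is the
union of small clopen neighbourhoods of a maximal separated set of the points near `Uᶜ` not yet
covered, a locally finite and hence clopen union. Near each point of `U` only finitely many layers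
occur, so the part of `U` the layers miss is open. The pieces are the unions of the layers along a
colouring `ℕ → I` with infinite fibres, the missed part being added to one of them.
-/

open Function Metric Set Filter Topology

theorem exists_maximal_pairwise_subset {α : Type*} (r : α → α → Prop) (s : Set α) :
    ∃ N, Maximal (fun N => N ⊆ s ∧ N.Pairwise r) N :=
  zorn_subset _ fun c hcs hc =>
    ⟨⋃₀ c, ⟨sUnion_subset fun _ ht => (hcs ht).1, hc.pairwise_sUnion.2 fun _ ht => (hcs ht).2⟩,
      fun _ => subset_sUnion_of_mem⟩

theorem exists_nat_infinite_fibers (I : Type*) [Countable I] [Nonempty I] :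
    ∃ g : ℕ → I, ∀ i, (g ⁻¹' {i}).Infinite := by
  obtain ⟨f, hf⟩ := exists_surjective_nat I
  refine ⟨fun t => f (Nat.unpair t).2, fun i => ?_⟩
  obtain ⟨k, rfl⟩ := hf i
  refine (infinite_range_of_injective (f := fun n => Nat.pair n k)
    fun m n h => (Nat.pair_eq_pair.1 h).1).mono ?_
  rintro _ ⟨n, rfl⟩
  simp

section Topology

variable {X : Type*} [TopologicalSpace X]

theorem notMem_derivedSet_of_inter_subsingleton [T1Space X] {B V : Set X} {x : X}
    (hV : V ∈ 𝓝 x) (h : (V ∩ B).Subsingleton) : x ∉ derivedSet B :=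
  fun hx => (Set.Infinite.of_accPt (hx.nhds_inter hV)) h.finite

theorem closure_diff_eq_of_iUnion_eq {ι : Type*} {Gs : ι → Set X} (hGs : ∀ i, IsOpen (Gs i))
    (hd : Pairwise (Disjoint on Gs)) {U : Set X} (hU : ⋃ i, Gs i = U) {i : ι}
    (h : closure U \ U ⊆ closure (Gs i)) : closure (Gs i) \ Gs i = closure U \ U := by
  refine Subset.antisymm (fun x ⟨hx, hxi⟩ => ⟨closure_mono (hU ▸ subset_iUnion Gs i) hx, ?_⟩)
    fun x hx => ⟨h hx, fun hxi => hx.2 (hU ▸ mem_iUnion_of_mem i hxi)⟩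
  rintro hxU
  obtain ⟨j, hxj⟩ := mem_iUnion.1 (hU ▸ hxU : x ∈ ⋃ i, Gs i)
  rcases eq_or_ne i j with rfl | hij
  · exact hxi hxj
  · exact disjoint_left.1 ((hd hij).closure_left (hGs j)) hx hxj

theorem isOpen_diff_of_inter_derivedSet_eq_empty {G B : Set X} (hG : IsOpen G)
    (hB : G ∩ derivedSet B = ∅) : IsOpen (G \ B) := by
  have : G \ B = G \ closure B := by
    refine Subset.antisymm (fun x ⟨hxG, hxB⟩ => ⟨hxG, fun hx => ?_⟩)
      (sdiff_subset_sdiff_right subset_closure)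
    rw [closure_eq_self_union_derivedSet] at hx
    exact hx.elim hxB fun hxd => hB.subset ⟨hxG, hxd⟩
  rw [this]
  exact hG.sdiff isClosed_closure

theorem closure_diff_diff_eq_closure {G B : Set X} (hBG : B ⊆ G) (hB : G ∩ derivedSet B = ∅)
    (hbd : closure G \ G ⊆ closure B) : closure G \ (G \ B) = closure B := by
  refine Subset.antisymm (fun x ⟨hxG, hx⟩ => ?_)
    fun x hx => ⟨closure_mono hBG hx, fun ⟨hxG, hxB⟩ => ?_⟩
  · by_cases hxG' : x ∈ G
    · exact subset_closure (not_not.1 fun hxB => hx ⟨hxG', hxB⟩)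
    · exact hbd ⟨hxG, hxG'⟩
  · rw [closure_eq_self_union_derivedSet] at hx
    exact hx.elim hxB fun hxd => hB.subset ⟨hxG, hxd⟩

theorem closure_diff_eq_closure_of_inter_derivedSet_eq_empty [PerfectSpace X] {G B : Set X}
    (hG : IsOpen G) (hB : G ∩ derivedSet B = ∅) : closure (G \ B) = closure G := by
  refine Subset.antisymm (closure_mono sdiff_subset)
    (closure_minimal (fun x hx => ?_) isClosed_closure)
  have hxG : x ∈ derivedSet G := preperfect_iff_subset_derivedSet.1
    (by simpa using PerfectSpace.univ_preperfect.open_inter hG) hx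
  rw [← sdiff_union_inter G B, derivedSet_union] at hxG
  exact hxG.elim (fun h => derivedSet_subset_closure _ h) fun hxB =>
    absurd (hB.subset ⟨hx, derivedSet_mono _ _ inter_subset_right hxB⟩) (notMem_empty x)

end Topology

section Metric

variable {X : Type*} [MetricSpace X]

theorem exists_maximal_separated (ρ : X → ℝ) {s : Set X} (hρ : ∀ x ∈ s, 0 < ρ x) :
    ∃ N ⊆ s, N.Pairwise (fun x y => min (ρ x) (ρ y) ≤ dist x y) ∧
      ∀ x ∈ s, ∃ y ∈ N, dist x y < ρ x := by
  obtain ⟨N, ⟨hNs, hN⟩, hmax⟩ := exists_maximal_pairwise_subset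
    (fun x y => min (ρ x) (ρ y) ≤ dist x y) s
  refine ⟨N, hNs, hN, fun x hx => ?_⟩
  by_cases hxN : x ∈ N
  · exact ⟨x, hxN, by simpa using hρ x hx⟩
  by_contra! hfar
  have hins : (insert x N).Pairwise (fun x y => min (ρ x) (ρ y) ≤ dist x y) :=
    hN.insert_of_notMem hxN fun y hy =>
      ⟨(min_le_left _ _).trans (hfar y hy), by
        rw [dist_comm]; exact (min_le_right _ _).trans (hfar y hy)⟩
  exact hxN (hmax ⟨insert_subset hx hNs, hins⟩ (subset_insert x N) (mem_insert x N))

theorem eq_of_dist_lt_of_pairwise_le_dist {ρ : X → ℝ} (hρ : LipschitzWith 1 ρ) {N : Set X}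
    (hN : N.Pairwise (fun x y => min (ρ x) (ρ y) ≤ dist x y)) {x y y' : X} (hy : y ∈ N)
    (hy' : y' ∈ N) (hxy : dist x y < ρ x / 3) (hxy' : dist x y' < ρ x / 3) : y = y' := by
  by_contra hne
  have hρ' : ∀ z, ρ x - dist x z ≤ ρ z := fun z => by
    have := hρ.le_add_mul x z
    simp only [NNReal.coe_one, one_mul] at this
    linarith
  have hsep : min (ρ y) (ρ y') ≤ dist y y' := hN hy hy' hne
  have hmin : 2 * ρ x / 3 < min (ρ y) (ρ y') :=
    lt_min (by linarith [hρ' y]) (by linarith [hρ' y'])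
  linarith [dist_triangle_left y y' x]

theorem IsOpen.exists_lipschitz_pos_le_dist_compl {G : Set X} (hG : IsOpen G) {ε : ℝ}
    (hε : 0 < ε) : ∃ ρ : X → ℝ, LipschitzWith 1 ρ ∧ (∀ x, ρ x ≤ ε) ∧ (∀ x ∈ G, 0 < ρ x) ∧
      ∀ x, ∀ p ∉ G, ρ x ≤ dist x p := by
  rcases Gᶜ.eq_empty_or_nonempty with h | h
  · exact ⟨fun _ => ε, LipschitzWith.const' ε, fun _ => le_rfl, fun _ _ => hε,
      fun _ p hp => (h.subset (show p ∈ Gᶜ from hp)).elim⟩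
  · exact ⟨fun x => min ε (infDist x Gᶜ), (lipschitz_infDist_pt Gᶜ).const_min ε,
      fun _ => min_le_left _ _,
      fun x hx => lt_min hε ((hG.isClosed_compl.notMem_iff_infDist_pos h).1 (not_not.2 hx)),
      fun _ _ hp => (min_le_right _ _).trans (infDist_le_dist_of_mem hp)⟩

theorem IsOpen.exists_discrete_net {G : Set X} (hG : IsOpen G) {ε : ℝ} (hε : 0 < ε) :
    ∃ B ⊆ G, G ∩ derivedSet B = ∅ ∧ closure G \ G ⊆ closure B ∧
      ∀ x ∈ G, ∃ b ∈ B, dist x b < ε := by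
  obtain ⟨ρ, hρL, hρε, hρpos, hρbd⟩ := hG.exists_lipschitz_pos_le_dist_compl hε
  obtain ⟨B, hBG, hBsep, hBcov⟩ := exists_maximal_separated ρ hρpos
  refine ⟨B, hBG, eq_empty_of_forall_notMem fun x ⟨hx, hxB⟩ => ?_, fun p ⟨hpG, hpnG⟩ => ?_,
    fun x hx => ?_⟩
  · refine notMem_derivedSet_of_inter_subsingleton
      (ball_mem_nhds x (by linarith [hρpos x hx] : 0 < ρ x / 3)) ?_ hxB
    rintro y ⟨hy, hyB⟩ y' ⟨hy', hy'B⟩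
    exact eq_of_dist_lt_of_pairwise_le_dist hρL hBsep hyB hy'B (mem_ball'.1 hy) (mem_ball'.1 hy')
  · refine Metric.mem_closure_iff.2 fun δ hδ => ?_
    obtain ⟨y, hyG, hpy⟩ := Metric.mem_closure_iff.1 hpG (δ / 2) (half_pos hδ)
    obtain ⟨b, hb, hyb⟩ := hBcov y hyG
    exact ⟨b, hb, by linarith [dist_triangle p y b, hρbd y p hpnG, dist_comm y p]⟩
  · obtain ⟨b, hb, hxb⟩ := hBcov x hx
    exact ⟨b, hb, hxb.trans_le (hρε x)⟩

theorem exists_isClopen_near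
    (h0 : ∀ x : X, ∀ U ∈ 𝓝 x, ∃ V : Set X, IsClopen V ∧ x ∈ V ∧ V ⊆ U)
    {V S : Set X} (hV : IsOpen V) (hSV : S ⊆ V) {r : ℝ} (hr : 0 < r) :
    ∃ T, IsClopen T ∧ T ⊆ V ∧ (∀ z ∈ T, ∃ s ∈ S, dist z s < r) ∧
      ∀ s ∈ S, ∃ z ∈ T, dist s z < r := by
  obtain ⟨N, hNS, hN, hcover⟩ := exists_maximal_separated (fun _ : X => r) (s := S) fun _ _ => hr
  have hclopen : ∀ y : N, ∃ W : Set X, IsClopen W ∧ (y : X) ∈ W ∧ W ⊆ ball (y : X) (r / 6) ∩ V :=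
    fun y => h0 y _ (inter_mem (ball_mem_nhds _ (by positivity)) (hV.mem_nhds (hSV (hNS y.2))))
  choose W hW using hclopen
  have hlf : LocallyFinite W := by
    refine fun x => ⟨ball x (r / 6), ball_mem_nhds _ (by positivity), Subsingleton.finite ?_⟩
    rintro y ⟨z, hzy, hzx⟩ y' ⟨z', hzy', hzx'⟩
    have hd : ∀ {y : N} {z : X}, z ∈ W y → z ∈ ball x (r / 6) → dist x y < r / 3 :=
      fun {y z} hzy hzx => by
        have h1 := mem_ball.1 ((hW y).2.2 hzy).1
        have h2 := mem_ball'.1 hzx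
        linarith [dist_triangle x z y]
    exact Subtype.ext (eq_of_dist_lt_of_pairwise_le_dist (LipschitzWith.const' r) hN
      y.2 y'.2 (hd hzy hzx) (hd hzy' hzx'))
  refine ⟨⋃ y, W y, ⟨hlf.isClosed_iUnion fun y => (hW y).1.isClosed,
    isOpen_iUnion fun y => (hW y).1.isOpen⟩,
    iUnion_subset fun y => ((hW y).2.2.trans inter_subset_right),
    fun z hz => ?_, fun s hs => ?_⟩
  · obtain ⟨y, hzy⟩ := mem_iUnion.1 hz
    exact ⟨y, hNS y.2, (mem_ball.1 ((hW y).2.2 hzy).1).trans (by linarith)⟩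
  · obtain ⟨y, hy, hsy⟩ := hcover s hs
    exact ⟨y, mem_iUnion.2 ⟨⟨y, hy⟩, (hW ⟨y, hy⟩).2.1⟩, hsy⟩

theorem exists_isClopen_layers
    (h0 : ∀ x : X, ∀ U ∈ 𝓝 x, ∃ V : Set X, IsClopen V ∧ x ∈ V ∧ V ⊆ U)
    {U : Set X} (hU : IsOpen U) {r : ℕ → ℝ} (hr : ∀ t, 0 < r t) :
    ∃ T : ℕ → Set X, (∀ t, IsClopen (T t)) ∧ (∀ t, T t ⊆ U) ∧ Pairwise (Disjoint on T) ∧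
      (∀ t, ∀ z ∈ T t, infDist z Uᶜ < r t) ∧
      ∀ p ∈ closure U \ U, ∀ t, ∃ z ∈ T t, dist p z < r t := by
  have hstep : ∀ (H : Set X) (t : ℕ), ∃ T, IsClopen T ∧ T ⊆ U \ closure H ∧
      (∀ z ∈ T, infDist z Uᶜ < r t) ∧
      ∀ x ∈ U \ closure H, infDist x Uᶜ < r t / 2 → ∃ z ∈ T, dist x z < r t / 2 := by
    intro H t
    obtain ⟨T, hT, hTV, hTS, hST⟩ := exists_isClopen_near h0 (hU.sdiff isClosed_closure)
      (sep_subset _ fun x => infDist x Uᶜ < r t / 2) (half_pos (hr t))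
    refine ⟨T, hT, hTV, fun z hz => ?_, fun x hx hxr => hST x ⟨hx, hxr⟩⟩
    obtain ⟨s, ⟨-, hs⟩, hzs⟩ := hTS z hz
    linarith [infDist_le_infDist_add_dist (x := z) (y := s) (s := Uᶜ)]
  choose F hF using hstep
  -- `C t` is the union of the first `t` layers `T 0, …, T (t - 1)`.
  let C : ℕ → Set X := fun t => Nat.rec ∅ (fun t C => C ∪ F C t) t
  let T : ℕ → Set X := fun t => F (C t) t
  have hC : ∀ t, IsClosed (C t) ∧ C t ⊆ U := by
    intro t
    induction t with
    | zero => exact ⟨isClosed_empty, empty_subset _⟩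
    | succ t ih =>
      exact ⟨ih.1.union (hF (C t) t).1.isClosed,
        union_subset ih.2 ((hF (C t) t).2.1.trans sdiff_subset)⟩
  have hTC : ∀ m t, m < t → T m ⊆ C t := by
    intro m t hmt
    induction t with
    | zero => exact absurd hmt (Nat.not_lt_zero m)
    | succ t ih =>
      rcases Nat.lt_succ_iff_lt_or_eq.1 hmt with h | rfl
      · exact (ih h).trans subset_union_left
      · exact subset_union_right
  refine ⟨T, fun t => (hF (C t) t).1, fun t => (hF (C t) t).2.1.trans sdiff_subset,
    (pairwise_disjoint_on T).2 fun m t hmt => ?_, fun t => (hF (C t) t).2.2.1, ?_⟩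
  · exact disjoint_left.2 fun z hzm hzt =>
      ((hF (C t) t).2.1 hzt).2 (subset_closure (hTC m t hmt hzm))
  · rintro p ⟨hpU, hpnU⟩ t
    have hpC : p ∉ C t := fun h => hpnU ((hC t).2 h)
    obtain ⟨q, ⟨hpq, hqC⟩, hqU⟩ := mem_closure_iff.1 hpU _
      (isOpen_ball.inter (hC t).1.isOpen_compl) ⟨mem_ball_self (half_pos (hr t)), hpC⟩
    have hqr : infDist q Uᶜ < r t / 2 :=
      (infDist_le_dist_of_mem hpnU).trans_lt (mem_ball.1 hpq)
    obtain ⟨z, hzT, hqz⟩ := (hF (C t) t).2.2.2 q ⟨hqU, by rwa [(hC t).1.closure_eq]⟩ hqr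
    exact ⟨z, hzT, by linarith [dist_triangle p q z, mem_ball'.1 hpq]⟩

theorem closure_iUnion_inter_subset_of_infDist_lt {U : Set X} (hU : IsOpen U)
    (hUc : Uᶜ.Nonempty) {T : ℕ → Set X} (hT : ∀ t, IsClosed (T t)) {r : ℕ → ℝ}
    (hr : Tendsto r atTop (𝓝 0))
    (hnear : ∀ t, ∀ z ∈ T t, infDist z Uᶜ < r t) :
    closure (⋃ t, T t) ∩ U ⊆ ⋃ t, T t := by
  rintro x ⟨hx, hxU⟩
  have hd : 0 < infDist x Uᶜ := (hU.isClosed_compl.notMem_iff_infDist_pos hUc).1 (not_not.2 hxU)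
  obtain ⟨N, hN⟩ := eventually_atTop.1 (hr.eventually (gt_mem_nhds (half_pos hd)))
  have hsub : ball x (infDist x Uᶜ / 2) ∩ ⋃ t, T t ⊆ ⋃ t ∈ Iio N, T t := by
    rintro z ⟨hzx, hz⟩
    obtain ⟨t, hzt⟩ := mem_iUnion.1 hz
    refine mem_biUnion (mem_Iio.2 (not_le.1 fun htN => ?_)) hzt
    linarith [hN t htN, hnear t z hzt, infDist_le_infDist_add_dist (x := x) (y := z) (s := Uᶜ),
      mem_ball'.1 hzx]
  have hcl : IsClosed (⋃ t ∈ Iio N, T t) := (finite_Iio N).isClosed_biUnion fun t _ => hT t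
  have hxN := hcl.closure_subset
    (closure_mono hsub (isOpen_ball.inter_closure ⟨mem_ball_self (half_pos hd), hx⟩))
  exact iUnion₂_subset (fun t _ => subset_iUnion T t) hxN

theorem closure_diff_subset_closure_biUnion {U : Set X} {T : ℕ → Set X} {r : ℕ → ℝ}
    (hr : Tendsto r atTop (𝓝 0)) (hacc : ∀ p ∈ closure U \ U, ∀ t, ∃ z ∈ T t, dist p z < r t)
    {S : Set ℕ} (hS : S.Infinite) : closure U \ U ⊆ closure (⋃ t ∈ S, T t) := by
  refine fun p hp => Metric.mem_closure_iff.2 fun δ hδ => ?_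
  obtain ⟨N, hN⟩ := eventually_atTop.1 (hr.eventually (gt_mem_nhds hδ))
  obtain ⟨t, htS, hNt⟩ := hS.exists_gt N
  obtain ⟨z, hz, hpz⟩ := hacc p hp t
  exact ⟨z, mem_biUnion htS hz, hpz.trans (hN t hNt.le)⟩

theorem exists_isOpen_partition_nat
    (h0 : ∀ x : X, ∀ U ∈ 𝓝 x, ∃ V : Set X, IsClopen V ∧ x ∈ V ∧ V ⊆ U)
    {U : Set X} (hU : IsOpen U) (hUc : Uᶜ.Nonempty) :
    ∃ P : ℕ → Set X, (∀ t, IsOpen (P t)) ∧ Pairwise (Disjoint on P) ∧ ⋃ t, P t = U ∧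
      ∀ S : Set ℕ, S.Infinite → closure U \ U ⊆ closure (⋃ t ∈ S, P t) := by
  have hr : Tendsto (fun t : ℕ => 1 / ((t : ℝ) + 1)) atTop (𝓝 0) :=
    tendsto_one_div_add_atTop_nhds_zero_nat
  obtain ⟨T, hTc, hTU, hTd, hTnear, hTacc⟩ :=
    exists_isClopen_layers h0 hU (r := fun t : ℕ => 1 / ((t : ℝ) + 1)) fun t => by positivity
  set R := U \ ⋃ t, T t
  have hR : IsOpen R := by
    have hRc : R = U \ closure (⋃ t, T t) :=
      Subset.antisymm (fun x ⟨hxU, hxT⟩ => ⟨hxU, fun hx => hxT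
          (closure_iUnion_inter_subset_of_infDist_lt hU hUc (fun t => (hTc t).isClosed) hr hTnear
            ⟨hx, hxU⟩)⟩)
        (sdiff_subset_sdiff_right subset_closure)
    rw [hRc]
    exact hU.sdiff isClosed_closure
  -- The remainder `R`, which the layers need not cover, is put into the first piece.
  set P : ℕ → Set X := fun t => if t = 0 then T 0 ∪ R else T t
  have hTP : ∀ t, T t ⊆ P t := fun t => by
    by_cases ht : t = 0
    · subst ht; simp only [P, if_pos rfl]; exact subset_union_left
    · simp only [P, if_neg ht]; rfl
  have hPTR : ∀ t, P t ⊆ T t ∪ R := fun t => by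
    by_cases ht : t = 0
    · subst ht; simp only [P, if_pos rfl]; rfl
    · simp only [P, if_neg ht]; exact subset_union_left
  have hRP : R ⊆ P 0 := by simp only [P, if_pos rfl]; exact subset_union_right
  refine ⟨P, fun t => ?_, (pairwise_disjoint_on P).2 fun m t hmt => ?_, ?_, fun S hS => ?_⟩
  · by_cases ht : t = 0
    · subst ht; simp only [P, if_pos rfl]; exact (hTc 0).isOpen.union hR
    · simp only [P, if_neg ht]; exact (hTc t).isOpen
  · have hPt : P t = T t := by simp only [P, if_neg (Nat.ne_zero_of_lt hmt)]
    rw [hPt]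
    refine disjoint_of_subset_left (hPTR m) (disjoint_union_left.2 ⟨hTd hmt.ne, ?_⟩)
    exact disjoint_left.2 fun z hzR hzT => hzR.2 (mem_iUnion_of_mem t hzT)
  · refine Subset.antisymm
      (iUnion_subset fun t => (hPTR t).trans (union_subset (hTU t) sdiff_subset)) fun x hx => ?_
    by_cases hxT : x ∈ ⋃ t, T t
    · obtain ⟨t, hxt⟩ := mem_iUnion.1 hxT
      exact mem_iUnion_of_mem t (hTP t hxt)
    · exact mem_iUnion_of_mem 0 (hRP ⟨hx, hxT⟩)
  · exact (closure_diff_subset_closure_biUnion hr hTacc hS).trans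
      (closure_mono (biUnion_mono subset_rfl fun t _ => hTP t))

theorem exists_isOpen_partition_closure_diff_eq
    (h0 : ∀ x : X, ∀ U ∈ 𝓝 x, ∃ V : Set X, IsClopen V ∧ x ∈ V ∧ V ⊆ U)
    (I : Type*) [Countable I] [Nonempty I] {U : Set X} (hU : IsOpen U) (hUc : Uᶜ.Nonempty) :
    ∃ Gs : I → Set X, (∀ i, IsOpen (Gs i)) ∧ Pairwise (Disjoint on Gs) ∧ ⋃ i, Gs i = U ∧
      ∀ i, closure (Gs i) \ Gs i = closure U \ U := by
  obtain ⟨P, hPo, hPd, hPU, hPacc⟩ := exists_isOpen_partition_nat h0 hU hUc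
  obtain ⟨g, hg⟩ := exists_nat_infinite_fibers I
  set Gs : I → Set X := fun i => ⋃ t ∈ g ⁻¹' {i}, P t
  have hopen : ∀ i, IsOpen (Gs i) := fun i => isOpen_biUnion fun t _ => hPo t
  have hdisj : Pairwise (Disjoint on Gs) := by
    intro i j hij
    simp only [onFun, Gs, disjoint_iUnion₂_left, disjoint_iUnion₂_right]
    rintro t rfl s rfl
    exact hPd fun hts => hij (congrArg g hts)
  have hunion : ⋃ i, Gs i = U := by
    rw [← hPU]
    ext x
    simp [Gs]
  exact ⟨Gs, hopen, hdisj, hunion,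
    fun i => closure_diff_eq_of_iUnion_eq hopen hdisj hunion (hPacc _ (hg i))⟩

end Metric

/-- In a 0-dimensional dense-in-itself metric space, any non-empty open `G` can be
partitioned into a non-empty set `B` and non-empty open sets `Gs i` (`i ∈ I`) with
the listed boundary, derived-set, and distance properties. -/
theorem stmt_10 {X : Type*} [MetricSpace X] [PerfectSpace X]
    (h0 : ∀ x : X, ∀ U ∈ nhds x, ∃ V : Set X, IsClopen V ∧ x ∈ V ∧ V ⊆ U)
    (I : Type*) [Countable I] [Nonempty I] {ε : ℝ} (hε : 0 < ε)
    {G : Set X} (hG : IsOpen G) (hGne : G.Nonempty) :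
    ∃ (B : Set X) (Gs : I → Set X),
      B.Nonempty ∧ (∀ i, IsOpen (Gs i) ∧ (Gs i).Nonempty) ∧
      Pairwise (Function.onFun Disjoint Gs) ∧ (∀ i, Disjoint B (Gs i)) ∧
      (B ∪ ⋃ i, Gs i) = G ∧
      closure G \ (⋃ i, Gs i) = closure B ∧
      (∀ i, closure B = closure (Gs i) \ Gs i) ∧
      G ∩ derivedSet B = ∅ ∧
      (∀ x ∈ G, Metric.infDist x B < ε) := by
  obtain ⟨B, hBG, hBd, hbd, hnear⟩ := hG.exists_discrete_net hε
  obtain ⟨x, hx⟩ := hGne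
  obtain ⟨b, hb, -⟩ := hnear x hx
  have hclB : closure G \ (G \ B) = closure B := closure_diff_diff_eq_closure hBG hBd hbd
  have hclU : closure (G \ B) = closure G :=
    closure_diff_eq_closure_of_inter_derivedSet_eq_empty hG hBd
  obtain ⟨Gs, hopen, hdisj, hunion, hGs⟩ := exists_isOpen_partition_closure_diff_eq h0 I
    (isOpen_diff_of_inter_derivedSet_eq_empty hG hBd) ⟨b, fun h => h.2 hb⟩
  have hbdry : ∀ i, closure B = closure (Gs i) \ Gs i := fun i => by rw [hGs, hclU, hclB]
  refine ⟨B, Gs, ⟨b, hb⟩, fun i => ⟨hopen i, ?_⟩, hdisj, fun i => ?_, ?_, by rw [hunion, hclB],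
    hbdry, hBd, fun x hx => ?_⟩
  · exact closure_nonempty_iff.1 ⟨b, ((hbdry i).subset (subset_closure hb)).1⟩
  · exact disjoint_left.2 fun y hyB hyi => (hunion.subset (mem_iUnion_of_mem i hyi)).2 hyB
  · rw [hunion, union_sdiff_cancel hBG]
  · obtain ⟨b, hb, hxb⟩ := hnear x hx
    exact (infDist_le_dist_of_mem hb).trans_lt hxb
end

section
/- Up to homeomorphism, the Cantor set is the unique non-empty compact 0-dimensional dense-in-itself metrizable space; equivalently, every compact, metrizable, totally disconnected, perfect, non-empty topological space is homeomorphic to the Cantor set. -/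
/-!
Enumerate a countable basis of clopen sets `U₀, U₁, …` and build clopen sets `S₀, S₁, …`
recursively: `S n` cuts every cell of the finite clopen partition generated by `S₀, …, S_{n-1}`
into two non-empty clopen halves, along `U n` whenever `U n` meets both sides of the cell, and
arbitrarily otherwise (possible since no point is isolated). Then every finite pattern of
memberships is realised, so by compactness `x ↦ (x ∈ S n)ₙ` maps `X` onto `ℕ → Bool`; and two
points separated by `U n` are separated by some `S i` with `i ≤ n`, so the map is injective.
A continuous bijection from a compact space to a Hausdorff one is a homeomorphism.
-/

open Set Filter Topology TopologicalSpace

section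

variable {X : Type*} [TopologicalSpace X]

namespace TopologicalSpace.Clopens

noncomputable def itinerary {ι : Type*} (S : ι → Clopens X) (x : X) : ι → Bool :=
  fun i => (S i : Set X).boolIndicator x

theorem itinerary_eq_true_iff {ι : Type*} {S : ι → Clopens X} {x : X} {i : ι} :
    itinerary S x i = true ↔ x ∈ S i :=
  ((S i : Set X).mem_iff_boolIndicator x).symm

theorem itinerary_eq_itinerary_iff {ι : Type*} {S : ι → Clopens X} {x y : X} :
    itinerary S x = itinerary S y ↔ ∀ i, (x ∈ S i ↔ y ∈ S i) :=
  funext_iff.trans <| forall_congr' fun i => by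
    rw [Bool.eq_iff_iff, itinerary_eq_true_iff, itinerary_eq_true_iff]

theorem continuous_itinerary {ι : Type*} (S : ι → Clopens X) : Continuous (itinerary S) :=
  continuous_pi fun i => (continuous_boolIndicator_iff_isClopen _).2 (S i).isClopen

theorem isLocallyConstant_itinerary {ι : Type*} [Finite ι] (S : ι → Clopens X) :
    IsLocallyConstant (itinerary S) :=
  (IsLocallyConstant.iff_continuous _).2 (continuous_itinerary S)

end TopologicalSpace.Clopens

theorem Continuous.surjective_of_exists_forall_lt_eq [CompactSpace X] {f : X → ℕ → Bool}
    (hf : Continuous f) (h : ∀ (n : ℕ) (w : ℕ → Bool), ∃ x, ∀ i < n, f x i = w i) :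
    Function.Surjective f := by
  intro w
  choose x hx using fun n => h n w
  have hlim : Tendsto (fun n => f (x n)) atTop (𝓝 w) :=
    tendsto_pi_nhds.2 fun i => tendsto_const_nhds.congr' <|
      (eventually_gt_atTop i).mono fun n hn => (hx n i hn).symm
  exact (isCompact_range hf).isClosed.mem_of_tendsto hlim (.of_forall fun n => mem_range_self _)

section Profinite

variable [CompactSpace X] [T2Space X] [TotallyDisconnectedSpace X]

theorem exists_clopens_separating [SecondCountableTopology X] [Nonempty X] :
    ∃ U : ℕ → Clopens X, ∀ x y, x ≠ y → ∃ n, x ∈ U n ∧ y ∉ U n := by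
  obtain ⟨s, hs, hsc, hb⟩ := isTopologicalBasis_isClopen.exists_countable (α := X)
  have hne : s.Nonempty := by
    obtain ⟨x⟩ := ‹Nonempty X›
    obtain ⟨u, hu, -⟩ := mem_sUnion.1 (hb.sUnion_eq ▸ mem_univ x)
    exact ⟨u, hu⟩
  obtain ⟨f, rfl⟩ := hsc.exists_eq_range hne
  refine ⟨fun n => ⟨f n, hs (mem_range_self n)⟩, fun x y hxy => ?_⟩
  obtain ⟨_, ⟨n, rfl⟩, hx, hsub⟩ :=
    hb.exists_subset_of_mem_open (mem_compl_singleton_iff.2 hxy) isOpen_compl_singleton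
  exact ⟨n, hx, fun hy => hsub hy rfl⟩

variable [PerfectSpace X]

theorem IsClopen.exists_isClopen_split {F : Set X} (hF : IsClopen F)
    (hne : F.Nonempty) : ∃ S ⊆ F, IsClopen S ∧ S.Nonempty ∧ (F \ S).Nonempty := by
  obtain ⟨x, hx⟩ := hne
  obtain ⟨y, ⟨hyF, -⟩, hyx⟩ := preperfect_iff_nhds.1 PerfectSpace.univ_preperfect x trivial F
    (hF.isOpen.mem_nhds hx)
  obtain ⟨S, hS, hxS, hSsub⟩ :=
    compact_exists_isClopen_in_isOpen (hF.isOpen.sdiff isClosed_singleton) ⟨hx, hyx.symm⟩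
  exact ⟨S, fun z hz => (hSsub hz).1, hS, ⟨x, hxS⟩, y, hyF, fun hyS => (hSsub hyS).2 rfl⟩

theorem IsClopen.exists_isClopen_split_along {F U : Set X} (hF : IsClopen F) (hne : F.Nonempty)
    (hU : IsClopen U) : ∃ S ⊆ F, IsClopen S ∧ S.Nonempty ∧ (F \ S).Nonempty ∧
      ∀ x ∈ F ∩ U, ∀ y ∈ F \ U, x ∈ S ∧ y ∉ S := by
  by_cases hsplit : (F ∩ U).Nonempty ∧ (F \ U).Nonempty
  · refine ⟨F ∩ U, inter_subset_left, hF.inter hU, hsplit.1, ?_, fun x hx y hy => ⟨hx, ?_⟩⟩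
    · simpa [sdiff_inter_self_eq_sdiff] using hsplit.2
    · exact fun h => hy.2 h.2
  · obtain ⟨S, hSF, hS, hSne, hFS⟩ := hF.exists_isClopen_split hne
    refine ⟨S, hSF, hS, hSne, hFS, fun x hx y hy => absurd ⟨⟨x, hx⟩, ⟨y, hy⟩⟩ hsplit⟩

theorem IsLocallyConstant.exists_isClopen_split_fibers {α : Type*} [Finite α] {p : X → α}
    (hp : IsLocallyConstant p) {U : Set X} (hU : IsClopen U) :
    ∃ S : Set X, IsClopen S ∧ (∀ x (b : Bool), ∃ y, p y = p x ∧ (y ∈ S ↔ b = true)) ∧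
      ∀ x y, p x = p y → x ∈ U → y ∉ U → x ∈ S ∧ y ∉ S := by
  have hfiber : ∀ v : range p, ∃ T ⊆ p ⁻¹' {v.1}, IsClopen T ∧ T.Nonempty ∧
      (p ⁻¹' {v.1} \ T).Nonempty ∧ ∀ x ∈ p ⁻¹' {v.1} ∩ U, ∀ y ∈ p ⁻¹' {v.1} \ U, x ∈ T ∧ y ∉ T :=
    fun ⟨v, x, hx⟩ => (hp.isClopen_fiber v).exists_isClopen_split_along ⟨x, hx⟩ hU
  choose T hTp hT hTne hTcompl hTU using hfiber
  have mem_iff : ∀ x, x ∈ ⋃ v, T v ↔ x ∈ T ⟨p x, mem_range_self x⟩ := by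
    refine fun x => ⟨fun hx => ?_, fun hx => mem_iUnion.2 ⟨_, hx⟩⟩
    obtain ⟨v, hv⟩ := mem_iUnion.1 hx
    obtain rfl : v = ⟨p x, mem_range_self x⟩ := Subtype.ext (hTp v hv).symm
    exact hv
  refine ⟨⋃ v, T v, isClopen_iUnion_of_finite hT, fun x b => ?_, fun x y hxy hx hy => ?_⟩
  · obtain ⟨y, hy, hyT⟩ : ∃ y ∈ p ⁻¹' {p x}, (y ∈ T ⟨p x, mem_range_self x⟩ ↔ b = true) := by
      cases b
      · obtain ⟨y, hy, hyT⟩ := hTcompl ⟨p x, mem_range_self x⟩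
        exact ⟨y, hy, by simpa using hyT⟩
      · obtain ⟨y, hy⟩ := hTne ⟨p x, mem_range_self x⟩
        exact ⟨y, hTp _ hy, by simpa using hy⟩
    have hyx : p y = p x := hy
    refine ⟨y, hyx, ?_⟩
    simpa only [mem_iff, hyx] using hyT
  · rw [mem_iff, mem_iff]
    have hyx : p y = p x := hxy.symm
    simp only [hyx]
    exact hTU ⟨p x, mem_range_self x⟩ x ⟨mem_singleton _, hx⟩ y ⟨hyx, hy⟩

end Profinite

namespace TopologicalSpace.Clopens

variable [CompactSpace X] [T2Space X] [TotallyDisconnectedSpace X] [PerfectSpace X]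

theorem exists_splitAlong {n : ℕ} (T : Fin n → Clopens X) (U : Clopens X) :
    ∃ S : Clopens X, (∀ x (b : Bool), ∃ y, (∀ i, y ∈ T i ↔ x ∈ T i) ∧ (y ∈ S ↔ b = true)) ∧
      ∀ x y, (∀ i, x ∈ T i ↔ y ∈ T i) → x ∈ U → y ∉ U → x ∈ S ∧ y ∉ S := by
  obtain ⟨S, hS, hsplit, hsep⟩ :=
    (isLocallyConstant_itinerary T).exists_isClopen_split_fibers U.isClopen
  simp only [itinerary_eq_itinerary_iff] at hsplit hsep
  exact ⟨⟨S, hS⟩, hsplit, hsep⟩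

noncomputable def splitAlong {n : ℕ} (T : Fin n → Clopens X) (U : Clopens X) : Clopens X :=
  (exists_splitAlong T U).choose

noncomputable def splittingSeq (U : ℕ → Clopens X) : ℕ → Clopens X
  | n => splitAlong (fun i : Fin n => splittingSeq U i) (U n)

variable (U : ℕ → Clopens X)

theorem exists_mem_splittingSeq_iff (n : ℕ) (x : X) (b : Bool) :
    ∃ y, (∀ i < n, y ∈ splittingSeq U i ↔ x ∈ splittingSeq U i) ∧
      (y ∈ splittingSeq U n ↔ b = true) := by
  rw [splittingSeq]
  obtain ⟨y, hy, hb⟩ := (exists_splitAlong _ (U n)).choose_spec.1 x b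
  exact ⟨y, fun i hi => hy ⟨i, hi⟩, hb⟩

theorem mem_splittingSeq_of_mem {n : ℕ} {x y : X}
    (hxy : ∀ i < n, x ∈ splittingSeq U i ↔ y ∈ splittingSeq U i) (hx : x ∈ U n) (hy : y ∉ U n) :
    x ∈ splittingSeq U n ∧ y ∉ splittingSeq U n := by
  rw [splittingSeq]
  exact (exists_splitAlong _ (U n)).choose_spec.2 x y (fun i => hxy i i.2) hx hy

theorem exists_itinerary_splittingSeq_lt_eq [Nonempty X] (n : ℕ) (w : ℕ → Bool) :
    ∃ x, ∀ i < n, itinerary (splittingSeq U) x i = w i := by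
  induction n with
  | zero => exact ⟨Classical.arbitrary X, fun i hi => absurd hi (Nat.not_lt_zero i)⟩
  | succ n ih =>
    obtain ⟨x, hx⟩ := ih
    obtain ⟨y, hyx, hy⟩ := exists_mem_splittingSeq_iff U n x (w n)
    refine ⟨y, fun i hi => ?_⟩
    rcases Nat.lt_succ_iff_lt_or_eq.1 hi with hi | rfl
    · rw [← hx i hi, Bool.eq_iff_iff, itinerary_eq_true_iff, itinerary_eq_true_iff]
      exact hyx i hi
    · rwa [Bool.eq_iff_iff, itinerary_eq_true_iff]

theorem injective_itinerary_splittingSeq (hU : ∀ x y, x ≠ y → ∃ n, x ∈ U n ∧ y ∉ U n) :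
    Function.Injective (itinerary (splittingSeq U)) := by
  intro x y hxy
  by_contra hne
  obtain ⟨n, hx, hy⟩ := hU x y hne
  rw [itinerary_eq_itinerary_iff] at hxy
  obtain ⟨hxS, hyS⟩ := mem_splittingSeq_of_mem U (fun i _ => hxy i) hx hy
  exact hyS ((hxy n).1 hxS)

end TopologicalSpace.Clopens

theorem nonempty_homeomorph_nat_to_bool [CompactSpace X] [T2Space X] [SecondCountableTopology X]
    [TotallyDisconnectedSpace X] [PerfectSpace X] [Nonempty X] : Nonempty (X ≃ₜ (ℕ → Bool)) := by
  obtain ⟨U, hU⟩ := exists_clopens_separating (X := X)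
  have hcont := Clopens.continuous_itinerary (Clopens.splittingSeq U)
  have hinj := Clopens.injective_itinerary_splittingSeq U hU
  have hsurj := hcont.surjective_of_exists_forall_lt_eq
    (Clopens.exists_itinerary_splittingSeq_lt_eq U)
  exact ⟨hcont.homeoOfEquivCompactToT2 (f := .ofBijective _ ⟨hinj, hsurj⟩)⟩

end

/-- Every non-empty compact metrizable totally disconnected perfect (dense-in-itself)
topological space is homeomorphic to the Cantor set (realized as `ℕ → Bool`). -/
theorem stmt_18 {X : Type*} [TopologicalSpace X] [CompactSpace X]
    [TopologicalSpace.MetrizableSpace X] [TotallyDisconnectedSpace X]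
    [PerfectSpace X] [Nonempty X] :
    Nonempty (X ≃ₜ (ℕ → Bool)) :=
  nonempty_homeomorph_nat_to_bool
end
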